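/- arXiv:2107.07980 — 5 statements merged into one kernel-verified Lean document; each statement's English description precedes it below -/
import Mathlib

section
/- Let p be a prime, N ≥ 1, let E : ℚ_p^N → ℝ be a radial function (E(x) depends only on ‖x‖_p) that is integrable with respect to the Haar measure, and let f : ℝ → ℝ be Lipschitz with constant L(f) and f(0) = 0. Then for every g ∈ X_∞ the function F₀(g)(x) = ∫_{ℚ_p^N} E(‖x−y‖_p) f(g(y)) d^N y is defined for all x ∈ ℚ_p^N, F₀(g) belongs to X_∞, and ‖F₀(g)‖_∞ ≤ L(f) ‖g‖_∞ ‖E‖_{L¹}. -/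
open MeasureTheory Filter

/-- A function on `ℚ_p^N` (with the sup norm) is *radial* if its value depends only on the norm. -/
def IsRadial {p N : ℕ} [Fact p.Prime] (E : (Fin N → ℚ_[p]) → ℝ) : Prop :=
  ∀ x y : Fin N → ℚ_[p], ‖x‖ = ‖y‖ → E x = E y

/-- Membership in `X_∞`: continuous and vanishing at infinity
(`g(x) → 0` as `‖x‖_p → ∞`). -/
def MemXInf {p N : ℕ} [Fact p.Prime] (g : (Fin N → ℚ_[p]) → ℝ) : Prop :=
  Continuous g ∧ Tendsto g (comap (fun x : Fin N → ℚ_[p] => ‖x‖) atTop) (nhds 0)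

/-- For a radial integrable `E`, a Lipschitz `f` with `f 0 = 0` and
`g ∈ X_∞`, the function `F₀(g)(x) = ∫ E(‖x-y‖_p) f(g(y)) d^N y` is defined for every `x`,
belongs to `X_∞`, and `‖F₀ g‖_∞ ≤ L(f) ‖g‖_∞ ‖E‖_{L¹}`. -/
theorem stmt0 (p N : ℕ) [Fact p.Prime] (hN : 1 ≤ N)
    [MeasurableSpace (Fin N → ℚ_[p])] [BorelSpace (Fin N → ℚ_[p])]
    (μ : Measure (Fin N → ℚ_[p])) [μ.IsAddHaarMeasure]
    (hμ : μ {x : Fin N → ℚ_[p] | ‖x‖ ≤ 1} = 1)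
    (E : (Fin N → ℚ_[p]) → ℝ) (hErad : IsRadial E) (hE : Integrable E μ)
    (f : ℝ → ℝ) (L : NNReal) (hf : LipschitzWith L f) (hf0 : f 0 = 0)
    (g : (Fin N → ℚ_[p]) → ℝ) (hg : MemXInf g) :
    (∀ x : Fin N → ℚ_[p], Integrable (fun y => E (x - y) * f (g y)) μ) ∧
    MemXInf (fun x : Fin N → ℚ_[p] => ∫ y, E (x - y) * f (g y) ∂μ) ∧
    (⨆ x : Fin N → ℚ_[p], |∫ y, E (x - y) * f (g y) ∂μ|)
      ≤ (L : ℝ) * (⨆ x : Fin N → ℚ_[p], |g x|) * ∫ y, |E y| ∂μ := by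
  obtain ⟨hgc, hgt⟩ := hg
  set h : (Fin N → ℚ_[p]) → ℝ := fun y => f (g y) with hh
  have hhc : Continuous h := hf.continuous.comp hgc
  -- `g` is bounded
  have hgb : ∃ C : ℝ, ∀ x, |g x| ≤ C := by
    have h1 : ∀ᶠ b : ℝ in atTop, ∀ x : Fin N → ℚ_[p], ‖x‖ = b → dist (g x) 0 < 1 :=
      eventually_comap.mp (Metric.tendsto_nhds.mp hgt 1 one_pos)
    obtain ⟨M, hM⟩ := eventually_atTop.mp h1
    have hK : IsCompact (Metric.closedBall (0 : Fin N → ℚ_[p]) M) := isCompact_closedBall _ _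
    obtain ⟨C, hC⟩ := hK.exists_bound_of_continuousOn hgc.continuousOn
    refine ⟨max C 1, fun x => ?_⟩
    rcases le_or_gt ‖x‖ M with hx | hx
    · have := hC x (by simpa [Metric.mem_closedBall, dist_zero_right] using hx)
      exact le_trans (by simpa [Real.norm_eq_abs] using this) (le_max_left _ _)
    · have := hM ‖x‖ hx.le x rfl
      rw [Real.dist_eq, sub_zero] at this
      exact le_trans this.le (le_max_right _ _)
  obtain ⟨C₀, hC₀⟩ := hgb
  have hS : BddAbove (Set.range fun x : Fin N → ℚ_[p] => |g x|) := by
    refine ⟨C₀, ?_⟩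
    rintro _ ⟨x, rfl⟩
    exact hC₀ x
  set S : ℝ := ⨆ x : Fin N → ℚ_[p], |g x| with hSdef
  have hgleS : ∀ x, |g x| ≤ S := fun x => le_ciSup hS x
  have hS0 : 0 ≤ S := le_trans (abs_nonneg (g 0)) (hgleS 0)
  have hhb : ∀ y, |h y| ≤ (L : ℝ) * S := by
    intro y
    have h1 : |f (g y) - f 0| ≤ (L : ℝ) * |g y - 0| := by
      simpa [Real.dist_eq] using hf.dist_le_mul (g y) 0
    rw [hf0, sub_zero, sub_zero] at h1
    exact le_trans h1 (mul_le_mul_of_nonneg_left (hgleS y) L.coe_nonneg)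
  -- Integrability
  have hint : ∀ x : Fin N → ℚ_[p], Integrable (fun y => E (x - y) * h y) μ := by
    intro x
    have h1 : Integrable (fun y => h y * E (x - y)) μ :=
      (hE.comp_sub_left x).bdd_mul hhc.aestronglyMeasurable
        (c := (L : ℝ) * S) (Eventually.of_forall fun y => by simpa [Real.norm_eq_abs] using hhb y)
    exact h1.congr (Eventually.of_forall fun y => mul_comm _ _)
  have hintAbs : ∀ x : Fin N → ℚ_[p],
      Integrable (fun y => |E (x - y)| * |h y|) μ := by
    intro x
    have h1 : Integrable (fun y => |h y| * |E (x - y)|) μ :=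
      (hE.abs.comp_sub_left x).bdd_mul hhc.abs.aestronglyMeasurable
        (c := (L : ℝ) * S) (Eventually.of_forall fun y => by simpa [Real.norm_eq_abs, abs_abs] using hhb y)
    exact h1.congr (Eventually.of_forall fun y => mul_comm _ _)
  set T : ℝ := ∫ y, |E y| ∂μ with hT
  have hT0 : 0 ≤ T := integral_nonneg fun y => abs_nonneg _
  have hEabs_sub : ∀ x : Fin N → ℚ_[p], ∫ y, |E (x - y)| ∂μ = T :=
    fun x => integral_sub_left_eq_self (fun z => |E z|) μ x
  -- pointwise bound on the integral
  have habs : ∀ x : Fin N → ℚ_[p],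
      |∫ y, E (x - y) * h y ∂μ| ≤ (L : ℝ) * S * T := by
    intro x
    have h1 : |∫ y, E (x - y) * h y ∂μ| ≤ ∫ y, |E (x - y)| * |h y| ∂μ := by
      have := norm_integral_le_integral_norm (μ := μ) (fun y => E (x - y) * h y)
      simpa [Real.norm_eq_abs, abs_mul] using this
    have h2 : ∫ y, |E (x - y)| * |h y| ∂μ ≤ ∫ y, |E (x - y)| * ((L : ℝ) * S) ∂μ := by
      refine integral_mono (hintAbs x) ((hE.abs.comp_sub_left x).mul_const _) fun y => ?_
      exact mul_le_mul_of_nonneg_left (hhb y) (abs_nonneg _)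
    have h3 : ∫ y, |E (x - y)| * ((L : ℝ) * S) ∂μ = (L : ℝ) * S * T := by
      rw [integral_mul_const, hEabs_sub x, mul_comm]
    linarith
  -- continuity via convolution
  have hFconv : (fun x : Fin N → ℚ_[p] => ∫ y, E (x - y) * h y ∂μ)
      = convolution E h (ContinuousLinearMap.mul ℝ ℝ) μ := by
    funext x
    show (∫ y, E (x - y) * h y ∂μ) = ∫ t, E t * h (x - t) ∂μ
    rw [← integral_sub_left_eq_self (fun t => E t * h (x - t)) μ x]
    congr 1
    funext y
    simp
  have hFcont : Continuous (fun x : Fin N → ℚ_[p] => ∫ y, E (x - y) * h y ∂μ) := by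
    rw [hFconv]
    refine BddAbove.continuous_convolution_right_of_integrable _ ?_ hE hhc
    refine ⟨(L : ℝ) * S, ?_⟩
    rintro _ ⟨y, rfl⟩
    simpa [Real.norm_eq_abs] using hhb y
  -- tail of E
  have tailE : ∀ δ : ℝ, 0 < δ → ∃ R : ℝ, 0 ≤ R ∧
      ∫ z in {z : Fin N → ℚ_[p] | R < ‖z‖}, |E z| ∂μ < δ := by
    intro δ hδ
    have hmeas : ∀ n : ℕ, MeasurableSet {z : Fin N → ℚ_[p] | ‖z‖ ≤ (n : ℝ)} := fun n =>
      (isClosed_le continuous_norm continuous_const).measurableSet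
    have hmono : Monotone (fun n : ℕ => {z : Fin N → ℚ_[p] | ‖z‖ ≤ (n : ℝ)}) := by
      intro a b hab z hz
      simp only [Set.mem_setOf_eq] at *
      exact hz.trans (by exact_mod_cast hab)
    have hunion : (⋃ n : ℕ, {z : Fin N → ℚ_[p] | ‖z‖ ≤ (n : ℝ)}) = Set.univ := by
      ext z
      simp only [Set.mem_iUnion, Set.mem_setOf_eq, Set.mem_univ, iff_true]
      exact exists_nat_ge ‖z‖
    have htend : Tendsto (fun n : ℕ => ∫ z in {z : Fin N → ℚ_[p] | ‖z‖ ≤ (n : ℝ)}, |E z| ∂μ)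
        atTop (nhds (∫ z in ⋃ n : ℕ, {z : Fin N → ℚ_[p] | ‖z‖ ≤ (n : ℝ)}, |E z| ∂μ)) :=
      tendsto_setIntegral_of_monotone hmeas hmono
        (hE.abs.integrableOn.mono_set (Set.subset_univ _))
    rw [hunion, setIntegral_univ] at htend
    obtain ⟨n₀, hn₀⟩ := Metric.tendsto_atTop.mp htend δ hδ
    have hd := hn₀ n₀ le_rfl
    rw [Real.dist_eq] at hd
    refine ⟨(n₀ : ℝ), Nat.cast_nonneg _, ?_⟩
    have hcompl : {z : Fin N → ℚ_[p] | (n₀ : ℝ) < ‖z‖}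
        = {z : Fin N → ℚ_[p] | ‖z‖ ≤ (n₀ : ℝ)}ᶜ := by
      ext z; simp [not_le]
    have hadd := integral_add_compl (hmeas n₀) hE.abs
    rw [hcompl]
    have habs' := abs_lt.mp hd
    linarith
  -- tail of g
  have tailg : ∀ δ : ℝ, 0 < δ → ∃ M : ℝ, ∀ x : Fin N → ℚ_[p], M ≤ ‖x‖ → |g x| < δ := by
    intro δ hδ
    have h1 : ∀ᶠ b : ℝ in atTop, ∀ x : Fin N → ℚ_[p], ‖x‖ = b → dist (g x) 0 < δ :=
      eventually_comap.mp (Metric.tendsto_nhds.mp hgt δ hδ)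
    obtain ⟨M, hM⟩ := eventually_atTop.mp h1
    refine ⟨M, fun x hx => ?_⟩
    have := hM ‖x‖ hx x rfl
    rwa [Real.dist_eq, sub_zero] at this
  -- vanishing at infinity
  have hvan : Tendsto (fun x : Fin N → ℚ_[p] => ∫ y, E (x - y) * h y ∂μ)
      (comap (fun x : Fin N → ℚ_[p] => ‖x‖) atTop) (nhds 0) := by
    rw [Metric.tendsto_nhds]
    intro ε hε
    set C : ℝ := (L : ℝ) * S + 1 with hCdef
    have hCpos : 0 < C := by positivity
    set δ' : ℝ := ε / (2 * ((L : ℝ) + 1) * (T + 1)) with hδ'def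
    have hδ'pos : 0 < δ' := by positivity
    obtain ⟨R, hR0, hRtail⟩ := tailE (ε / (2 * C)) (by positivity)
    obtain ⟨M₁, hM₁⟩ := tailg δ' hδ'pos
    have key : ∀ x : Fin N → ℚ_[p], M₁ + R + 1 ≤ ‖x‖ →
        |∫ y, E (x - y) * h y ∂μ| < ε := by
      intro x hx
      set s : Set (Fin N → ℚ_[p]) := {y | ‖x - y‖ ≤ R} with hsdef
      have hs : MeasurableSet s :=
        (isClosed_le ((continuous_const.sub continuous_id).norm) continuous_const).measurableSet
      have h1 : |∫ y, E (x - y) * h y ∂μ| ≤ ∫ y, |E (x - y)| * |h y| ∂μ := by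
        have := norm_integral_le_integral_norm (μ := μ) (fun y => E (x - y) * h y)
        simpa [Real.norm_eq_abs, abs_mul] using this
      have hsplit : ∫ y, |E (x - y)| * |h y| ∂μ
          = (∫ y in s, |E (x - y)| * |h y| ∂μ) + ∫ y in sᶜ, |E (x - y)| * |h y| ∂μ :=
        (integral_add_compl hs (hintAbs x)).symm
      -- first piece
      have hpart1 : ∫ y in s, |E (x - y)| * |h y| ∂μ ≤ (L : ℝ) * δ' * T := by
        have hbd : ∀ y ∈ s, |E (x - y)| * |h y| ≤ |E (x - y)| * ((L : ℝ) * δ') := by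
          intro y hy
          have hxy : ‖x - y‖ ≤ R := hy
          have hyn : M₁ ≤ ‖y‖ := by
            have h2 : ‖x‖ - ‖y‖ ≤ ‖x - y‖ :=
              le_trans (le_abs_self _) (abs_norm_sub_norm_le x y)
            linarith
          have hgy : |g y| < δ' := hM₁ y hyn
          have hhy : |h y| ≤ (L : ℝ) * δ' := by
            have h1' : |f (g y) - f 0| ≤ (L : ℝ) * |g y - 0| := by
              simpa [Real.dist_eq] using hf.dist_le_mul (g y) 0
            rw [hf0, sub_zero, sub_zero] at h1'
            exact le_trans h1' (mul_le_mul_of_nonneg_left hgy.le L.coe_nonneg)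
          exact mul_le_mul_of_nonneg_left hhy (abs_nonneg _)
        have hm1 : ∫ y in s, |E (x - y)| * |h y| ∂μ
            ≤ ∫ y in s, |E (x - y)| * ((L : ℝ) * δ') ∂μ :=
          setIntegral_mono_on (hintAbs x).integrableOn
            (((hE.abs.comp_sub_left x).mul_const _).integrableOn) hs hbd
        have hm2 : ∫ y in s, |E (x - y)| * ((L : ℝ) * δ') ∂μ
            ≤ ∫ y, |E (x - y)| * ((L : ℝ) * δ') ∂μ := by
          refine setIntegral_le_integral ((hE.abs.comp_sub_left x).mul_const _) ?_
          exact Eventually.of_forall fun y => by positivity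
        have hm3 : ∫ y, |E (x - y)| * ((L : ℝ) * δ') ∂μ = (L : ℝ) * δ' * T := by
          rw [integral_mul_const, hEabs_sub x, mul_comm]
        linarith
      -- second piece
      have hchg : ∫ y in sᶜ, |E (x - y)| ∂μ
          = ∫ z in {z : Fin N → ℚ_[p] | R < ‖z‖}, |E z| ∂μ := by
        have hmeasc : MeasurableSet {z : Fin N → ℚ_[p] | R < ‖z‖} :=
          (isOpen_lt continuous_const continuous_norm).measurableSet
        rw [← integral_indicator hs.compl, ← integral_indicator hmeasc,
          ← integral_sub_left_eq_self
            (Set.indicator {z : Fin N → ℚ_[p] | R < ‖z‖} (fun z => |E z|)) μ x]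
        congr 1
        funext y
        by_cases hy : R < ‖x - y‖
        · rw [Set.indicator_of_mem (show x - y ∈ {z : Fin N → ℚ_[p] | R < ‖z‖} from hy),
            Set.indicator_of_mem]
          simp only [hsdef, Set.mem_compl_iff, Set.mem_setOf_eq, not_le]
          exact hy
        · rw [Set.indicator_of_notMem
            (show x - y ∉ {z : Fin N → ℚ_[p] | R < ‖z‖} from hy), Set.indicator_of_notMem]
          simp only [hsdef, Set.mem_compl_iff, Set.mem_setOf_eq, not_not, not_le]
          exact hy
      have hpart2 : ∫ y in sᶜ, |E (x - y)| * |h y| ∂μ < ε / 2 := by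
        have hbd : ∀ y ∈ sᶜ, |E (x - y)| * |h y| ≤ |E (x - y)| * C := by
          intro y _
          refine mul_le_mul_of_nonneg_left ?_ (abs_nonneg _)
          exact le_trans (hhb y) (by linarith)
        have hm1 : ∫ y in sᶜ, |E (x - y)| * |h y| ∂μ
            ≤ ∫ y in sᶜ, |E (x - y)| * C ∂μ :=
          setIntegral_mono_on (hintAbs x).integrableOn
            (((hE.abs.comp_sub_left x).mul_const _).integrableOn) hs.compl hbd
        have hm2 : ∫ y in sᶜ, |E (x - y)| * C ∂μ
            = (∫ y in sᶜ, |E (x - y)| ∂μ) * C := integral_mul_const _ _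
        have hm3 : (∫ y in sᶜ, |E (x - y)| ∂μ) * C < ε / 2 := by
          rw [hchg]
          calc (∫ z in {z : Fin N → ℚ_[p] | R < ‖z‖}, |E z| ∂μ) * C
              < (ε / (2 * C)) * C := by
                exact mul_lt_mul_of_pos_right hRtail hCpos
            _ = ε / 2 := by field_simp
        exact lt_of_le_of_lt (hm1.trans (le_of_eq hm2)) hm3
      have hhalf : (L : ℝ) * δ' * T ≤ ε / 2 := by
        rw [hδ'def]
        rw [show (L : ℝ) * (ε / (2 * ((L : ℝ) + 1) * (T + 1))) * T
            = ((L : ℝ) * T * ε) / (2 * ((L : ℝ) + 1) * (T + 1)) by ring]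
        rw [div_le_div_iff₀ (by positivity) (by norm_num : (0:ℝ) < 2)]
        nlinarith [L.coe_nonneg, hT0, hε.le, mul_nonneg L.coe_nonneg hT0,
          mul_nonneg (mul_nonneg L.coe_nonneg hT0) hε.le]
      linarith
    refine eventually_comap.mpr (eventually_atTop.mpr ⟨M₁ + R + 1, fun b hb x hxb => ?_⟩)
    rw [Real.dist_eq, sub_zero]
    exact key x (hxb ▸ hb)
  refine ⟨hint, ⟨hFcont, hvan⟩, ?_⟩
  exact ciSup_le habs
end

section
/- Let A, B : ℚ_p^N → ℝ be radial integrable functions, U, Z ∈ X_∞, f : ℝ → ℝ Lipschitz with constant L(f) and f(0) = 0, τ > 0, and X₀ ∈ X_∞. Define the map T on the Banach space C([0,τ], X_∞) (with the supremum norm) by T(Y)(t) = e^{−t} X₀ + ∫₀^t e^{−(t−s)} H(Y(s)) ds. Then for every M ≥ 1 and all Y, Y₁ ∈ C([0,τ], X_∞), the M-fold iterate satisfies ‖T^M(Y) − T^M(Y₁)‖ ≤ (τ^M L(f)^M ‖A‖_{L¹}^M / M!) ‖Y − Y₁‖. -/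
open MeasureTheory Filter

/-- The operator `H` of a `p`-adic continuous CNN. -/
noncomputable def Hop {p N : ℕ} [Fact p.Prime] [MeasurableSpace (Fin N → ℚ_[p])]
    (μ : MeasureTheory.Measure (Fin N → ℚ_[p]))
    (A B U Z : (Fin N → ℚ_[p]) → ℝ) (f : ℝ → ℝ)
    (g : (Fin N → ℚ_[p]) → ℝ) (x : Fin N → ℚ_[p]) : ℝ :=
  (∫ y, A (x - y) * f (g y) ∂μ) + (∫ y, B (x - y) * U y ∂μ) + Z x

/-- Membership in `C([0,τ], X_∞)`: each time slice is in `X_∞` and `t ↦ Y(t)` is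
continuous in the sup norm. -/
def MemCXInf {p N : ℕ} [Fact p.Prime] (τ : ℝ) (Y : ℝ → (Fin N → ℚ_[p]) → ℝ) : Prop :=
  (∀ t ∈ Set.Icc (0:ℝ) τ, MemXInf (Y t)) ∧
  (∀ t₀ ∈ Set.Icc (0:ℝ) τ, ∀ ε > (0:ℝ), ∃ δ > (0:ℝ), ∀ t ∈ Set.Icc (0:ℝ) τ,
      |t - t₀| < δ → ∀ x : Fin N → ℚ_[p], |Y t x - Y t₀ x| ≤ ε)

section Aux

set_option linter.unusedSectionVars false
variable {p N : ℕ} [Fact p.Prime] [MeasurableSpace (Fin N → ℚ_[p])]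
    [BorelSpace (Fin N → ℚ_[p])] {μ : Measure (Fin N → ℚ_[p])} [μ.IsAddHaarMeasure]

/-- A continuous function vanishing at infinity is bounded. -/
lemma memXInf_bdd {g : (Fin N → ℚ_[p]) → ℝ} (hg : MemXInf g) :
    ∃ C : ℝ, 0 ≤ C ∧ ∀ x, |g x| ≤ C := by
  obtain ⟨S, hS, hSsub⟩ := Filter.mem_comap.mp (hg.2 (Metric.ball_mem_nhds (0:ℝ) one_pos))
  obtain ⟨a, ha⟩ := Filter.mem_atTop_sets.mp hS
  obtain ⟨C, hC⟩ := (isCompact_closedBall (0 : Fin N → ℚ_[p]) a).exists_bound_of_continuousOn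
    hg.1.continuousOn
  refine ⟨max C 1, le_trans zero_le_one (le_max_right _ _), fun x => ?_⟩
  by_cases hx : ‖x‖ ≤ a
  · exact le_trans (by simpa [Real.norm_eq_abs] using hC x (mem_closedBall_zero_iff.mpr hx))
      (le_max_left _ _)
  · have hxS : x ∈ (fun x : Fin N → ℚ_[p] => ‖x‖) ⁻¹' S := ha ‖x‖ (le_of_lt (lt_of_not_ge hx))
    have := hSsub hxS
    simp only [Set.mem_preimage, Metric.mem_ball, Real.dist_eq, sub_zero] at this
    exact le_trans this.le (le_max_right _ _)

lemma lip_abs_le {L : NNReal} {f : ℝ → ℝ} (hf : LipschitzWith L f) (hf0 : f 0 = 0) (z : ℝ) :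
    |f z| ≤ (L : ℝ) * |z| := by
  have := hf.dist_le_mul z 0
  simpa [hf0, Real.dist_eq] using this

lemma integrable_ker {A : (Fin N → ℚ_[p]) → ℝ} (hA : Integrable A μ) (x : Fin N → ℚ_[p])
    {h : (Fin N → ℚ_[p]) → ℝ} (hm : AEStronglyMeasurable h μ) {C : ℝ} (hC : ∀ y, |h y| ≤ C) :
    Integrable (fun y => A (x - y) * h y) μ := by
  have hAx := hA.comp_sub_left x
  refine (hAx.abs.mul_const C).mono' (hAx.aestronglyMeasurable.mul hm) ?_
  filter_upwards with y
  rw [Real.norm_eq_abs, abs_mul]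
  exact mul_le_mul_of_nonneg_left (hC y) (abs_nonneg _)

lemma ker_integral_bound {A : (Fin N → ℚ_[p]) → ℝ} (hA : Integrable A μ) (x : Fin N → ℚ_[p])
    {h : (Fin N → ℚ_[p]) → ℝ} {C : ℝ} (hC : ∀ y, |h y| ≤ C) :
    |∫ y, A (x - y) * h y ∂μ| ≤ (∫ z, |A z| ∂μ) * C := by
  have hAx := hA.comp_sub_left x
  have h1 : ‖∫ y, A (x - y) * h y ∂μ‖ ≤ ∫ y, |A (x - y)| * C ∂μ := by
    refine norm_integral_le_of_norm_le (hAx.abs.mul_const C) ?_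
    filter_upwards with y
    rw [Real.norm_eq_abs, abs_mul]
    exact mul_le_mul_of_nonneg_left (hC y) (abs_nonneg _)
  rw [Real.norm_eq_abs] at h1
  refine h1.trans (le_of_eq ?_)
  rw [MeasureTheory.integral_mul_const]
  congr 1
  exact integral_sub_left_eq_self (fun z => |A z|) μ x

variable {A B U Z : (Fin N → ℚ_[p]) → ℝ} {f : ℝ → ℝ} {L : NNReal}

lemma hop_sub (hA : Integrable A μ) (hf : LipschitzWith L f) (hf0 : f 0 = 0)
    {g g' : (Fin N → ℚ_[p]) → ℝ}
    (hgm : AEStronglyMeasurable g μ) (hg'm : AEStronglyMeasurable g' μ)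
    {Cg Cg' : ℝ} (hCg : ∀ y, |g y| ≤ Cg) (hCg' : ∀ y, |g' y| ≤ Cg')
    {d : ℝ} (hd : ∀ y, |g y - g' y| ≤ d) (x : Fin N → ℚ_[p]) :
    |Hop μ A B U Z f g x - Hop μ A B U Z f g' x| ≤ (L : ℝ) * (∫ z, |A z| ∂μ) * d := by
  have hfg : ∀ y, |f (g y)| ≤ (L : ℝ) * Cg := fun y =>
    (lip_abs_le hf hf0 _).trans (mul_le_mul_of_nonneg_left (hCg y) L.coe_nonneg)
  have hfg' : ∀ y, |f (g' y)| ≤ (L : ℝ) * Cg' := fun y =>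
    (lip_abs_le hf hf0 _).trans (mul_le_mul_of_nonneg_left (hCg' y) L.coe_nonneg)
  have h1 : Integrable (fun y => A (x - y) * f (g y)) μ :=
    integrable_ker hA x (hf.continuous.comp_aestronglyMeasurable hgm) hfg
  have h2 : Integrable (fun y => A (x - y) * f (g' y)) μ :=
    integrable_ker hA x (hf.continuous.comp_aestronglyMeasurable hg'm) hfg'
  have e : Hop μ A B U Z f g x - Hop μ A B U Z f g' x
      = ∫ y, A (x - y) * (f (g y) - f (g' y)) ∂μ := by
    simp only [Hop]
    have : (fun y => A (x - y) * (f (g y) - f (g' y)))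
        = fun y => A (x - y) * f (g y) - A (x - y) * f (g' y) := by
      funext y; ring
    rw [this, integral_sub h1 h2]
    ring
  rw [e]
  have hdd : ∀ y, |f (g y) - f (g' y)| ≤ (L : ℝ) * d := by
    intro y
    have h := hf.dist_le_mul (g y) (g' y)
    rw [Real.dist_eq, Real.dist_eq] at h
    exact h.trans (mul_le_mul_of_nonneg_left (hd y) L.coe_nonneg)
  have := ker_integral_bound (μ := μ) hA x
    (h := fun y => f (g y) - f (g' y)) (C := (L : ℝ) * d) hdd
  refine this.trans (le_of_eq (by ring))

lemma hop_bound (hA : Integrable A μ) (hB : Integrable B μ)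
    (hf : LipschitzWith L f) (hf0 : f 0 = 0)
    {CU CZ : ℝ} (hUb : ∀ y, |U y| ≤ CU) (hZb : ∀ x, |Z x| ≤ CZ)
    {g : (Fin N → ℚ_[p]) → ℝ} (hgm : AEStronglyMeasurable g μ)
    {Cg : ℝ} (hCg : ∀ y, |g y| ≤ Cg) (x : Fin N → ℚ_[p]) :
    |Hop μ A B U Z f g x|
      ≤ (∫ z, |A z| ∂μ) * ((L : ℝ) * Cg) + (∫ z, |B z| ∂μ) * CU + CZ := by
  have hfg : ∀ y, |f (g y)| ≤ (L : ℝ) * Cg := fun y =>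
    (lip_abs_le hf hf0 _).trans (mul_le_mul_of_nonneg_left (hCg y) L.coe_nonneg)
  have b1 := ker_integral_bound (μ := μ) hA x (h := fun y => f (g y)) hfg
  have b2 := ker_integral_bound (μ := μ) hB x (h := U) hUb
  calc |Hop μ A B U Z f g x|
      ≤ |(∫ y, A (x - y) * f (g y) ∂μ) + (∫ y, B (x - y) * U y ∂μ)| + |Z x| := abs_add_le _ _
    _ ≤ |∫ y, A (x - y) * f (g y) ∂μ| + |∫ y, B (x - y) * U y ∂μ| + |Z x| :=
        add_le_add_left (abs_add_le _ _) _
    _ ≤ (∫ z, |A z| ∂μ) * ((L : ℝ) * Cg) + (∫ z, |B z| ∂μ) * CU + CZ :=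
        add_le_add (add_le_add b1 b2) (hZb x)


/-- Time-continuity of `s ↦ Hop (Y s) x` on `[0,τ]`. -/
lemma hop_time_contOn (hA : Integrable A μ) (hf : LipschitzWith L f) (hf0 : f 0 = 0)
    {τ : ℝ} {Y : ℝ → (Fin N → ℚ_[p]) → ℝ}
    (hYc : ∀ t ∈ Set.Icc (0:ℝ) τ, Continuous (Y t))
    {C : ℝ} (hYb : ∀ t ∈ Set.Icc (0:ℝ) τ, ∀ x, |Y t x| ≤ C)
    (hYt : ∀ x, ContinuousOn (fun t => Y t x) (Set.Icc (0:ℝ) τ)) (x : Fin N → ℚ_[p]) :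
    ContinuousOn (fun s => Hop μ A B U Z f (Y s) x) (Set.Icc (0:ℝ) τ) := by
  have key : ContinuousOn (fun s => ∫ y, A (x - y) * f (Y s y) ∂μ) (Set.Icc (0:ℝ) τ) := by
    intro s₀ hs₀
    show Tendsto _ _ _
    apply tendsto_integral_filter_of_dominated_convergence
      (bound := fun y => |A (x - y)| * ((L : ℝ) * C))
    · filter_upwards [self_mem_nhdsWithin] with s hs
      exact (hA.comp_sub_left x).aestronglyMeasurable.mul
        (hf.continuous.comp_aestronglyMeasurable (hYc s hs).aestronglyMeasurable)
    · filter_upwards [self_mem_nhdsWithin] with s hs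
      filter_upwards with y
      rw [Real.norm_eq_abs, abs_mul]
      refine mul_le_mul_of_nonneg_left ?_ (abs_nonneg _)
      exact (lip_abs_le hf hf0 _).trans
        (mul_le_mul_of_nonneg_left (hYb s hs y) L.coe_nonneg)
    · exact ((hA.comp_sub_left x).abs.mul_const _)
    · filter_upwards with y
      exact Tendsto.const_mul _ ((hf.continuous.tendsto _).comp ((hYt y s₀ hs₀).tendsto))
  have eqn : (fun s => Hop μ A B U Z f (Y s) x)
      = fun s => (∫ y, A (x - y) * f (Y s y) ∂μ) + ((∫ y, B (x - y) * U y ∂μ) + Z x) := by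
    funext s; simp only [Hop]; ring
  rw [eqn]
  exact key.add continuousOn_const

/-- Space-continuity of `Hop g` for continuous bounded `g`. -/
lemma hop_cont_x (hA : Integrable A μ) (hB : Integrable B μ)
    (hf : LipschitzWith L f) (hf0 : f 0 = 0)
    (hUc : Continuous U) {CU : ℝ} (hUb : ∀ y, |U y| ≤ CU) (hZc : Continuous Z)
    {g : (Fin N → ℚ_[p]) → ℝ} (hgc : Continuous g) {Cg : ℝ} (hCg : ∀ y, |g y| ≤ Cg) :
    Continuous (Hop μ A B U Z f g) := by
  have e1 : ∀ x : Fin N → ℚ_[p],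
      (∫ y, A (x - y) * f (g y) ∂μ) = ∫ z, A z * f (g (x - z)) ∂μ := by
    intro x
    have h := integral_sub_left_eq_self (fun z => A z * f (g (x - z))) μ x
    simp only [sub_sub_cancel] at h
    exact h
  have e2 : ∀ x : Fin N → ℚ_[p],
      (∫ y, B (x - y) * U y ∂μ) = ∫ z, B z * U (x - z) ∂μ := by
    intro x
    have h := integral_sub_left_eq_self (fun z => B z * U (x - z)) μ x
    simp only [sub_sub_cancel] at h
    exact h
  have eqn : Hop μ A B U Z f g
      = fun x => (∫ z, A z * f (g (x - z)) ∂μ) + (∫ z, B z * U (x - z) ∂μ) + Z x := by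
    funext x; rw [Hop, e1, e2]
  rw [eqn]
  have c1 : Continuous fun x : Fin N → ℚ_[p] => ∫ z, A z * f (g (x - z)) ∂μ := by
    rw [continuous_iff_continuousAt]
    intro x₀
    apply tendsto_integral_filter_of_dominated_convergence
      (bound := fun z => |A z| * ((L : ℝ) * Cg))
    · filter_upwards with x
      exact hA.aestronglyMeasurable.mul
        ((hf.continuous.comp (hgc.comp (continuous_const.sub continuous_id))).aestronglyMeasurable)
    · filter_upwards with x
      filter_upwards with z
      rw [Real.norm_eq_abs, abs_mul]
      refine mul_le_mul_of_nonneg_left ?_ (abs_nonneg _)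
      exact (lip_abs_le hf hf0 _).trans (mul_le_mul_of_nonneg_left (hCg _) L.coe_nonneg)
    · exact hA.abs.mul_const _
    · filter_upwards with z
      exact ((continuous_const.mul (hf.continuous.comp
        (hgc.comp (continuous_id.sub continuous_const)))).tendsto x₀)
  have c2 : Continuous fun x : Fin N → ℚ_[p] => ∫ z, B z * U (x - z) ∂μ := by
    rw [continuous_iff_continuousAt]
    intro x₀
    apply tendsto_integral_filter_of_dominated_convergence (bound := fun z => |B z| * CU)
    · filter_upwards with x
      exact hB.aestronglyMeasurable.mul
        ((hUc.comp (continuous_const.sub continuous_id)).aestronglyMeasurable)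
    · filter_upwards with x
      filter_upwards with z
      rw [Real.norm_eq_abs, abs_mul]
      exact mul_le_mul_of_nonneg_left (hUb _) (abs_nonneg _)
    · exact hB.abs.mul_const _
    · filter_upwards with z
      exact ((continuous_const.mul (hUc.comp (continuous_id.sub continuous_const))).tendsto x₀)
  exact (c1.add c2).add hZc


/-- The working invariant: continuity in space, uniform boundedness, and pointwise
continuity in time on `[0,τ]`. -/
def QP {p N : ℕ} [Fact p.Prime] (τ : ℝ) (Y : ℝ → (Fin N → ℚ_[p]) → ℝ) : Prop :=
  (∀ t ∈ Set.Icc (0:ℝ) τ, Continuous (Y t)) ∧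
  (∃ C : ℝ, 0 ≤ C ∧ ∀ t ∈ Set.Icc (0:ℝ) τ, ∀ x, |Y t x| ≤ C) ∧
  (∀ x, ContinuousOn (fun t => Y t x) (Set.Icc (0:ℝ) τ))

lemma QP_of_memCXInf {τ : ℝ} (hτ : 0 < τ) {Y : ℝ → (Fin N → ℚ_[p]) → ℝ}
    (hY : MemCXInf τ Y) : QP τ Y := by
  refine ⟨fun t ht => (hY.1 t ht).1, ?_, ?_⟩
  · -- uniform boundedness via compactness
    have key : ∀ t₀ ∈ Set.Icc (0:ℝ) τ, ∃ V : Set ℝ, V ∈ nhds t₀ ∧ ∃ C : ℝ, 0 ≤ C ∧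
        ∀ t ∈ V ∩ Set.Icc (0:ℝ) τ, ∀ x, |Y t x| ≤ C := by
      intro t₀ ht₀
      obtain ⟨C₀, hC₀0, hC₀⟩ := memXInf_bdd (hY.1 t₀ ht₀)
      obtain ⟨δ, hδ, hδY⟩ := hY.2 t₀ ht₀ 1 one_pos
      refine ⟨Metric.ball t₀ δ, Metric.ball_mem_nhds _ hδ, C₀ + 1, by positivity, ?_⟩
      rintro t ⟨htb, hti⟩ x
      have hd : |t - t₀| < δ := by
        have := Metric.mem_ball.mp htb; rwa [Real.dist_eq] at this
      have h1 := hδY t hti hd x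
      calc |Y t x| = |Y t₀ x + (Y t x - Y t₀ x)| := by ring_nf
        _ ≤ |Y t₀ x| + |Y t x - Y t₀ x| := abs_add_le _ _
        _ ≤ C₀ + 1 := add_le_add (hC₀ x) h1
    choose V hVmem C hC0 hCb using key
    obtain ⟨tset, htset⟩ := isCompact_Icc.elim_nhds_subcover'
      (fun t₀ ht₀ => V t₀ ht₀) (fun t₀ ht₀ => hVmem t₀ ht₀)
    by_cases hne : tset.Nonempty
    · refine ⟨tset.sup' hne (fun i => C i.1 i.2), ?_, ?_⟩
      · obtain ⟨i, hi⟩ := hne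
        exact le_trans (hC0 i.1 i.2) (Finset.le_sup' (fun j : {a // a ∈ Set.Icc (0:ℝ) τ} => C j.1 j.2) hi)
      · intro t ht x
        obtain ⟨i, hi, hti⟩ := Set.mem_iUnion₂.mp (htset ht)
        exact le_trans (hCb i.1 i.2 t ⟨hti, ht⟩ x) (Finset.le_sup' (fun j : {a // a ∈ Set.Icc (0:ℝ) τ} => C j.1 j.2) hi)
    · exfalso
      have h0 : (0:ℝ) ∈ Set.Icc (0:ℝ) τ := ⟨le_refl _, hτ.le⟩
      obtain ⟨i, hi, _⟩ := Set.mem_iUnion₂.mp (htset h0)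
      exact hne ⟨i, hi⟩
  · intro x t₀ ht₀
    rw [Metric.continuousWithinAt_iff]
    intro ε hε
    obtain ⟨δ, hδ, hδY⟩ := hY.2 t₀ ht₀ (ε / 2) (by positivity)
    refine ⟨δ, hδ, fun t ht hd => ?_⟩
    rw [Real.dist_eq] at hd ⊢
    exact lt_of_le_of_lt (hδY t ht hd x) (by linarith)


lemma cont_exp_neg_sub (t : ℝ) : Continuous fun s : ℝ => Real.exp (-(t - s)) :=
  Real.continuous_exp.comp ((continuous_const.sub continuous_id).neg)

lemma hop_intervalIntegrable (hA : Integrable A μ) (hf : LipschitzWith L f) (hf0 : f 0 = 0)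
    {τ : ℝ} {Y : ℝ → (Fin N → ℚ_[p]) → ℝ} (hQ : QP τ Y)
    {t : ℝ} (ht : t ∈ Set.Icc (0:ℝ) τ) (x : Fin N → ℚ_[p]) :
    IntervalIntegrable (fun s => Real.exp (-(t - s)) * Hop μ A B U Z f (Y s) x)
      MeasureTheory.volume 0 t := by
  obtain ⟨hYc, ⟨C, hC0, hYb⟩, hYt⟩ := hQ
  apply ContinuousOn.intervalIntegrable
  rw [Set.uIcc_of_le ht.1]
  exact ((cont_exp_neg_sub t).continuousOn).mul
    ((hop_time_contOn hA hf hf0 hYc hYb hYt x).mono (Set.Icc_subset_Icc_right ht.2))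

set_option maxHeartbeats 2000000 in
lemma QP_T (hA : Integrable A μ) (hB : Integrable B μ)
    (hf : LipschitzWith L f) (hf0 : f 0 = 0)
    (hUc : Continuous U) {CU : ℝ} (hUb : ∀ y, |U y| ≤ CU)
    (hZc : Continuous Z) {CZ : ℝ} (hZb : ∀ x, |Z x| ≤ CZ)
    {X₀ : (Fin N → ℚ_[p]) → ℝ} (hX₀c : Continuous X₀) {C₀ : ℝ} (hX₀b : ∀ x, |X₀ x| ≤ C₀)
    {τ : ℝ} (hτ0 : 0 ≤ τ)
    {T : (ℝ → (Fin N → ℚ_[p]) → ℝ) → ℝ → (Fin N → ℚ_[p]) → ℝ}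
    (hT : ∀ Y : ℝ → (Fin N → ℚ_[p]) → ℝ, ∀ t : ℝ, ∀ x : Fin N → ℚ_[p],
      T Y t x = Real.exp (-t) * X₀ x +
        ∫ s in (0:ℝ)..t, Real.exp (-(t - s)) * Hop μ A B U Z f (Y s) x)
    {Y : ℝ → (Fin N → ℚ_[p]) → ℝ} (hQ : QP τ Y) : QP τ (T Y) := by
  obtain ⟨hYc, ⟨C, hC0, hYb⟩, hYt⟩ := hQ
  have hnA : (0:ℝ) ≤ ∫ z, |A z| ∂μ := integral_nonneg fun _ => abs_nonneg _
  have hnB : (0:ℝ) ≤ ∫ z, |B z| ∂μ := integral_nonneg fun _ => abs_nonneg _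
  have hCU : (0:ℝ) ≤ CU := le_trans (abs_nonneg _) (hUb 0)
  have hCZ : (0:ℝ) ≤ CZ := le_trans (abs_nonneg _) (hZb 0)
  have hC₀0 : (0:ℝ) ≤ C₀ := le_trans (abs_nonneg _) (hX₀b 0)
  set K : ℝ := (∫ z, |A z| ∂μ) * ((L : ℝ) * C) + (∫ z, |B z| ∂μ) * CU + CZ with hK
  have hK0 : 0 ≤ K := by positivity
  have hHb : ∀ s ∈ Set.Icc (0:ℝ) τ, ∀ x, |Hop μ A B U Z f (Y s) x| ≤ K := fun s hs x =>
    hop_bound hA hB hf hf0 hUb hZb (hYc s hs).aestronglyMeasurable (hYb s hs) x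
  have hHtc : ∀ x, ContinuousOn (fun s => Hop μ A B U Z f (Y s) x) (Set.Icc (0:ℝ) τ) :=
    hop_time_contOn hA hf hf0 hYc hYb hYt
  refine ⟨?_, ⟨C₀ + K * τ, ?_, ?_⟩, ?_⟩
  · -- continuity in x
    intro t ht
    have e : T Y t = fun x => Real.exp (-t) * X₀ x +
        ∫ s in (0:ℝ)..t, Real.exp (-(t - s)) * Hop μ A B U Z f (Y s) x :=
      funext fun x => hT Y t x
    rw [e]
    refine (continuous_const.mul hX₀c).add ?_
    have e2 : (fun x => ∫ s in (0:ℝ)..t, Real.exp (-(t - s)) * Hop μ A B U Z f (Y s) x)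
        = fun x => ∫ s in Set.Ioc (0:ℝ) t, Real.exp (-(t - s)) * Hop μ A B U Z f (Y s) x := by
      funext x; exact intervalIntegral.integral_of_le ht.1
    rw [e2, continuous_iff_continuousAt]
    intro x₀
    apply tendsto_integral_filter_of_dominated_convergence (bound := fun _ => K)
    · filter_upwards with x
      refine ContinuousOn.aestronglyMeasurable ?_ measurableSet_Ioc
      exact ((cont_exp_neg_sub t).continuousOn).mul
        ((hHtc x).mono (fun s hs => ⟨hs.1.le, hs.2.trans ht.2⟩))
    · filter_upwards with x
      filter_upwards [ae_restrict_mem measurableSet_Ioc] with s hs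
      have hsIcc : s ∈ Set.Icc (0:ℝ) τ := ⟨hs.1.le, hs.2.trans ht.2⟩
      rw [Real.norm_eq_abs, abs_mul, Real.abs_exp]
      calc Real.exp (-(t - s)) * |Hop μ A B U Z f (Y s) x|
          ≤ 1 * K := mul_le_mul (Real.exp_le_one_iff.mpr (by linarith [hs.2]))
            (hHb s hsIcc x) (abs_nonneg _) zero_le_one
        _ = K := one_mul K
    · exact integrable_const K
    · filter_upwards [ae_restrict_mem measurableSet_Ioc] with s hs
      have hsIcc : s ∈ Set.Icc (0:ℝ) τ := ⟨hs.1.le, hs.2.trans ht.2⟩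
      exact Tendsto.const_mul _ ((hop_cont_x hA hB hf hf0 hUc hUb hZc
        (hYc s hsIcc) (hYb s hsIcc)).tendsto x₀)
  · have := mul_nonneg hK0 hτ0
    linarith
  · -- uniform bound
    intro t ht x
    rw [hT]
    have h1 : |Real.exp (-t) * X₀ x| ≤ C₀ := by
      rw [abs_mul, Real.abs_exp]
      calc Real.exp (-t) * |X₀ x| ≤ 1 * C₀ :=
            mul_le_mul (Real.exp_le_one_iff.mpr (by linarith [ht.1])) (hX₀b x)
              (abs_nonneg _) zero_le_one
        _ = C₀ := one_mul _
    have h2 : |∫ s in (0:ℝ)..t, Real.exp (-(t - s)) * Hop μ A B U Z f (Y s) x| ≤ K * τ := by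
      have hb : ∀ s ∈ Set.uIoc (0:ℝ) t,
          ‖Real.exp (-(t - s)) * Hop μ A B U Z f (Y s) x‖ ≤ K := by
        intro s hs
        rw [Set.uIoc_of_le ht.1] at hs
        have hsIcc : s ∈ Set.Icc (0:ℝ) τ := ⟨hs.1.le, hs.2.trans ht.2⟩
        rw [Real.norm_eq_abs, abs_mul, Real.abs_exp]
        calc Real.exp (-(t - s)) * |Hop μ A B U Z f (Y s) x|
            ≤ 1 * K := mul_le_mul (Real.exp_le_one_iff.mpr (by linarith [hs.2]))
              (hHb s hsIcc x) (abs_nonneg _) zero_le_one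
          _ = K := one_mul K
      have := intervalIntegral.norm_integral_le_of_norm_le_const hb
      rw [Real.norm_eq_abs] at this
      refine this.trans ?_
      have : |t - 0| ≤ τ := by rw [sub_zero, abs_of_nonneg ht.1]; exact ht.2
      exact mul_le_mul_of_nonneg_left this hK0
    calc |Real.exp (-t) * X₀ x +
          ∫ s in (0:ℝ)..t, Real.exp (-(t - s)) * Hop μ A B U Z f (Y s) x|
        ≤ |Real.exp (-t) * X₀ x| +
          |∫ s in (0:ℝ)..t, Real.exp (-(t - s)) * Hop μ A B U Z f (Y s) x| := abs_add_le _ _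
      _ ≤ C₀ + K * τ := add_le_add h1 h2
  · -- continuity in t
    intro x
    have rep : ∀ t : ℝ, T Y t x = Real.exp (-t) * X₀ x +
        Real.exp (-t) * ∫ s in (0:ℝ)..t, Real.exp s * Hop μ A B U Z f (Y s) x := by
      intro t
      rw [hT]
      congr 1
      rw [← intervalIntegral.integral_const_mul]
      apply intervalIntegral.integral_congr
      intro s _
      show Real.exp (-(t - s)) * _ = Real.exp (-t) * (Real.exp s * _)
      rw [← mul_assoc, ← Real.exp_add, show -t + s = -(t - s) by ring]
    have e : (fun t => T Y t x) = fun t => Real.exp (-t) * X₀ x +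
        Real.exp (-t) * ∫ s in (0:ℝ)..t, Real.exp s * Hop μ A B U Z f (Y s) x :=
      funext rep
    rw [e]
    have cexp : ContinuousOn (fun t : ℝ => Real.exp (-t)) (Set.Icc (0:ℝ) τ) :=
      (Real.continuous_exp.comp continuous_neg).continuousOn
    have hInt : IntegrableOn (fun s => Real.exp s * Hop μ A B U Z f (Y s) x)
        (Set.Icc (0:ℝ) τ) MeasureTheory.volume :=
      (Real.continuous_exp.continuousOn.mul (hHtc x)).integrableOn_Icc
    have hPrim := intervalIntegral.continuousOn_primitive (a := 0) (b := τ) hInt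
    have cP : ContinuousOn (fun t => ∫ s in (0:ℝ)..t, Real.exp s * Hop μ A B U Z f (Y s) x)
        (Set.Icc (0:ℝ) τ) := by
      refine hPrim.congr ?_
      intro t ht
      exact intervalIntegral.integral_of_le ht.1
    exact (cexp.mul continuousOn_const).add (cexp.mul cP)

end Aux

set_option maxHeartbeats 1000000 in
/-- The Picard iterates of the map
`T(Y)(t) = e^{−t} X₀ + ∫₀^t e^{−(t−s)} H(Y(s)) ds` satisfy
`‖T^M Y − T^M Y₁‖ ≤ (τ^M L^M ‖A‖₁^M / M!) ‖Y − Y₁‖` on `C([0,τ], X_∞)`. -/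
theorem stmt4 (p N : ℕ) [Fact p.Prime] (hN : 1 ≤ N)
    [MeasurableSpace (Fin N → ℚ_[p])] [BorelSpace (Fin N → ℚ_[p])]
    (μ : Measure (Fin N → ℚ_[p])) [μ.IsAddHaarMeasure]
    (hμ : μ {x : Fin N → ℚ_[p] | ‖x‖ ≤ 1} = 1)
    (A B : (Fin N → ℚ_[p]) → ℝ) (hArad : IsRadial A) (hBrad : IsRadial B)
    (hA : Integrable A μ) (hB : Integrable B μ)
    (U Z : (Fin N → ℚ_[p]) → ℝ) (hU : MemXInf U) (hZ : MemXInf Z)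
    (f : ℝ → ℝ) (L : NNReal) (hf : LipschitzWith L f) (hf0 : f 0 = 0)
    (τ : ℝ) (hτ : 0 < τ)
    (X₀ : (Fin N → ℚ_[p]) → ℝ) (hX₀ : MemXInf X₀)
    (T : (ℝ → (Fin N → ℚ_[p]) → ℝ) → ℝ → (Fin N → ℚ_[p]) → ℝ)
    (hT : ∀ Y : ℝ → (Fin N → ℚ_[p]) → ℝ, ∀ t : ℝ, ∀ x : Fin N → ℚ_[p],
      T Y t x = Real.exp (-t) * X₀ x +
        ∫ s in (0:ℝ)..t, Real.exp (-(t - s)) * Hop μ A B U Z f (Y s) x) :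
    ∀ M : ℕ, 1 ≤ M → ∀ Y Y₁ : ℝ → (Fin N → ℚ_[p]) → ℝ,
      MemCXInf τ Y → MemCXInf τ Y₁ →
      (⨆ t : Set.Icc (0:ℝ) τ, ⨆ x : Fin N → ℚ_[p], |T^[M] Y t x - T^[M] Y₁ t x|)
        ≤ (τ ^ M * (L : ℝ) ^ M * (∫ y, |A y| ∂μ) ^ M / Nat.factorial M) *
          ⨆ t : Set.Icc (0:ℝ) τ, ⨆ x : Fin N → ℚ_[p], |Y t x - Y₁ t x| := by
  intro M _hM Y Y₁ hYmem hY₁mem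
  classical
  set nA : ℝ := ∫ z, |A z| ∂μ with hnAdef
  have hnA0 : (0:ℝ) ≤ nA := integral_nonneg fun _ => abs_nonneg _
  obtain ⟨CU, hCU0, hUb⟩ := memXInf_bdd hU
  obtain ⟨CZ, hCZ0, hZb⟩ := memXInf_bdd hZ
  obtain ⟨C₀, hC₀0, hX₀b⟩ := memXInf_bdd hX₀
  have hQY : QP τ Y := QP_of_memCXInf hτ hYmem
  have hQY₁ : QP τ Y₁ := QP_of_memCXInf hτ hY₁mem
  obtain ⟨CY, hCY0, hYb⟩ := hQY.2.1
  obtain ⟨CY₁, hCY₁0, hY₁b⟩ := hQY₁.2.1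
  set D : ℝ := ⨆ t : Set.Icc (0:ℝ) τ, ⨆ x : Fin N → ℚ_[p], |Y t x - Y₁ t x| with hDdef
  have hdiffb : ∀ t ∈ Set.Icc (0:ℝ) τ, ∀ x, |Y t x - Y₁ t x| ≤ CY + CY₁ := by
    intro t ht x
    calc |Y t x - Y₁ t x| ≤ |Y t x| + |Y₁ t x| := abs_sub _ _
      _ ≤ CY + CY₁ := add_le_add (hYb t ht x) (hY₁b t ht x)
  have hDle : ∀ t ∈ Set.Icc (0:ℝ) τ, ∀ x, |Y t x - Y₁ t x| ≤ D := by
    intro t ht x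
    have hb1 : BddAbove (Set.range fun x : Fin N → ℚ_[p] => |Y t x - Y₁ t x|) :=
      ⟨CY + CY₁, by rintro _ ⟨x', rfl⟩; exact hdiffb t ht x'⟩
    have h1 : |Y t x - Y₁ t x| ≤ ⨆ x', |Y t x' - Y₁ t x'| := le_ciSup hb1 x
    have hb2 : BddAbove (Set.range fun t' : Set.Icc (0:ℝ) τ =>
        ⨆ x', |Y t'.1 x' - Y₁ t'.1 x'|) := by
      refine ⟨CY + CY₁, ?_⟩
      rintro _ ⟨t', rfl⟩
      exact Real.iSup_le (fun x' => hdiffb t'.1 t'.2 x') (by positivity)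
    exact h1.trans (le_ciSup hb2 ⟨t, ht⟩)
  have hD0 : 0 ≤ D := Real.iSup_nonneg fun t => Real.iSup_nonneg fun x => abs_nonneg _
  have key : ∀ k : ℕ, QP τ (T^[k] Y) ∧ QP τ (T^[k] Y₁) ∧
      ∀ t ∈ Set.Icc (0:ℝ) τ, ∀ x, |T^[k] Y t x - T^[k] Y₁ t x|
        ≤ ((L : ℝ) * nA) ^ k * t ^ k / (Nat.factorial k) * D := by
    intro k
    induction k with
    | zero =>
      refine ⟨hQY, hQY₁, ?_⟩
      intro t ht x
      simpa using hDle t ht x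
    | succ k ih =>
      obtain ⟨hQA, hQB, hest⟩ := ih
      refine ⟨?_, ?_, ?_⟩
      · rw [Function.iterate_succ_apply']
        exact QP_T hA hB hf hf0 hU.1 hUb hZ.1 hZb hX₀.1 hX₀b hτ.le hT hQA
      · rw [Function.iterate_succ_apply']
        exact QP_T hA hB hf hf0 hU.1 hUb hZ.1 hZb hX₀.1 hX₀b hτ.le hT hQB
      · intro t ht x
        rw [Function.iterate_succ_apply', Function.iterate_succ_apply']
        obtain ⟨hAc, ⟨CA, hCA0, hAb⟩, hAt⟩ := hQA
        obtain ⟨hBc, ⟨CB, hCB0, hBb⟩, hBt⟩ := hQB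
        have hI1 := hop_intervalIntegrable (B := B) (U := U) (Z := Z) hA hf hf0
          ⟨hAc, ⟨CA, hCA0, hAb⟩, hAt⟩ ht x
        have hI2 := hop_intervalIntegrable (B := B) (U := U) (Z := Z) hA hf hf0
          ⟨hBc, ⟨CB, hCB0, hBb⟩, hBt⟩ ht x
        have hsub : T (T^[k] Y) t x - T (T^[k] Y₁) t x
            = ∫ s in (0:ℝ)..t, Real.exp (-(t - s)) *
                (Hop μ A B U Z f (T^[k] Y s) x - Hop μ A B U Z f (T^[k] Y₁ s) x) := by
          rw [hT, hT, add_sub_add_left_eq_sub, ← intervalIntegral.integral_sub hI1 hI2]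
          apply intervalIntegral.integral_congr
          intro s _
          exact (mul_sub _ _ _).symm
        rw [hsub]
        have h0t : (0:ℝ) ≤ t := ht.1
        have hcA := hop_time_contOn (B := B) (U := U) (Z := Z) hA hf hf0 hAc hAb hAt x
        have hcB := hop_time_contOn (B := B) (U := U) (Z := Z) hA hf hf0 hBc hBb hBt x
        have hcont : ContinuousOn (fun s => Real.exp (-(t - s)) *
            (Hop μ A B U Z f (T^[k] Y s) x - Hop μ A B U Z f (T^[k] Y₁ s) x))
            (Set.Icc (0:ℝ) t) :=
          ((cont_exp_neg_sub t).continuousOn).mul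
            ((hcA.mono (Set.Icc_subset_Icc_right ht.2)).sub
              (hcB.mono (Set.Icc_subset_Icc_right ht.2)))
        have step1 : |∫ s in (0:ℝ)..t, Real.exp (-(t - s)) *
              (Hop μ A B U Z f (T^[k] Y s) x - Hop μ A B U Z f (T^[k] Y₁ s) x)|
            ≤ ∫ s in (0:ℝ)..t, |Real.exp (-(t - s)) *
              (Hop μ A B U Z f (T^[k] Y s) x - Hop μ A B U Z f (T^[k] Y₁ s) x)| := by
          have := intervalIntegral.norm_integral_le_integral_norm
            (f := fun s => Real.exp (-(t - s)) *
              (Hop μ A B U Z f (T^[k] Y s) x - Hop μ A B U Z f (T^[k] Y₁ s) x))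
            (μ := MeasureTheory.volume) h0t
          simpa only [Real.norm_eq_abs] using this
        have comp : ∀ s ∈ Set.Icc (0:ℝ) t,
            |Real.exp (-(t - s)) *
              (Hop μ A B U Z f (T^[k] Y s) x - Hop μ A B U Z f (T^[k] Y₁ s) x)|
            ≤ ((L : ℝ) * nA) ^ (k + 1) * D / (Nat.factorial k) * s ^ k := by
          intro s hs
          have hsτ : s ∈ Set.Icc (0:ℝ) τ := ⟨hs.1, hs.2.trans ht.2⟩
          have hdiff := hop_sub (B := B) (U := U) (Z := Z) hA hf hf0
            (hAc s hsτ).aestronglyMeasurable (hBc s hsτ).aestronglyMeasurable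
            (hAb s hsτ) (hBb s hsτ) (fun y => hest s hsτ y) x
          rw [abs_mul, Real.abs_exp]
          calc Real.exp (-(t - s)) *
                |Hop μ A B U Z f (T^[k] Y s) x - Hop μ A B U Z f (T^[k] Y₁ s) x|
              ≤ 1 * ((L : ℝ) * nA * (((L : ℝ) * nA) ^ k * s ^ k / (Nat.factorial k) * D)) :=
                mul_le_mul (Real.exp_le_one_iff.mpr (by linarith [hs.2])) hdiff
                  (abs_nonneg _) zero_le_one
            _ = ((L : ℝ) * nA) ^ (k + 1) * D / (Nat.factorial k) * s ^ k := by
                rw [pow_succ]; ring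
        have hint1 : IntervalIntegrable (fun s => |Real.exp (-(t - s)) *
            (Hop μ A B U Z f (T^[k] Y s) x - Hop μ A B U Z f (T^[k] Y₁ s) x)|)
            MeasureTheory.volume 0 t := by
          apply ContinuousOn.intervalIntegrable
          rw [Set.uIcc_of_le h0t]
          exact hcont.abs
        have hint2 : IntervalIntegrable
            (fun s => ((L : ℝ) * nA) ^ (k + 1) * D / (Nat.factorial k) * s ^ k)
            MeasureTheory.volume 0 t :=
          (continuous_const.mul (continuous_pow k)).intervalIntegrable 0 t
        have step2 := intervalIntegral.integral_mono_on h0t hint1 hint2 comp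
        have step3 : (∫ s in (0:ℝ)..t,
              ((L : ℝ) * nA) ^ (k + 1) * D / (Nat.factorial k) * s ^ k)
            = ((L : ℝ) * nA) ^ (k + 1) * t ^ (k + 1) / (Nat.factorial (k + 1)) * D := by
          rw [intervalIntegral.integral_const_mul, integral_pow]
          have hk : ((Nat.factorial k : ℝ)) ≠ 0 := Nat.cast_ne_zero.mpr k.factorial_ne_zero
          have hk1 : ((k : ℝ) + 1) ≠ 0 := by positivity
          rw [Nat.factorial_succ]
          push_cast
          field_simp
          ring
        calc |∫ s in (0:ℝ)..t, Real.exp (-(t - s)) *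
              (Hop μ A B U Z f (T^[k] Y s) x - Hop μ A B U Z f (T^[k] Y₁ s) x)|
            ≤ ∫ s in (0:ℝ)..t, |Real.exp (-(t - s)) *
              (Hop μ A B U Z f (T^[k] Y s) x - Hop μ A B U Z f (T^[k] Y₁ s) x)| := step1
          _ ≤ ∫ s in (0:ℝ)..t,
              ((L : ℝ) * nA) ^ (k + 1) * D / (Nat.factorial k) * s ^ k := step2
          _ = ((L : ℝ) * nA) ^ (k + 1) * t ^ (k + 1) / (Nat.factorial (k + 1)) * D := step3
  have hRHS0 : 0 ≤ (τ ^ M * (L : ℝ) ^ M * nA ^ M / Nat.factorial M) * D := by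
    have hL0 : (0:ℝ) ≤ (L : ℝ) := L.coe_nonneg
    have hfac : (0:ℝ) < Nat.factorial M := by positivity
    have h1 : (0:ℝ) ≤ τ ^ M * (L : ℝ) ^ M * nA ^ M :=
      mul_nonneg (mul_nonneg (pow_nonneg hτ.le M) (pow_nonneg hL0 M)) (pow_nonneg hnA0 M)
    exact mul_nonneg (div_nonneg h1 hfac.le) hD0
  have hfinal : ∀ t ∈ Set.Icc (0:ℝ) τ, ∀ x, |T^[M] Y t x - T^[M] Y₁ t x|
      ≤ (τ ^ M * (L : ℝ) ^ M * nA ^ M / Nat.factorial M) * D := by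
    intro t ht x
    refine ((key M).2.2 t ht x).trans ?_
    have htpow : t ^ M ≤ τ ^ M := pow_le_pow_left₀ ht.1 ht.2 M
    have hLnA : (0:ℝ) ≤ ((L : ℝ) * nA) ^ M := pow_nonneg (mul_nonneg L.coe_nonneg hnA0) M
    have hfac : (0:ℝ) < Nat.factorial M := by positivity
    have h1 : ((L : ℝ) * nA) ^ M * t ^ M / Nat.factorial M * D
        ≤ ((L : ℝ) * nA) ^ M * τ ^ M / Nat.factorial M * D := by
      gcongr
    refine h1.trans (le_of_eq ?_)
    rw [mul_pow]
    ring
  exact Real.iSup_le (fun t => Real.iSup_le (fun x => hfinal t.1 t.2 x) hRHS0) hRHS0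
end

section
/- Let M₀ ∈ ℕ, let A, B : ℚ_p^N → ℝ be radial integrable functions supported in the ball p^{−M₀}ℤ_p^N = {x : ‖x‖_p ≤ p^{M₀}}, let U, Z, X₀ ∈ X_{M₀}, and let f : ℝ → ℝ be Lipschitz with f(0) = 0. Then for every τ > 0 the unique solution X of the integral equation X(·,t) = e^{−t} X₀ + ∫₀^t e^{−(t−s)} H(X(·,s)) ds satisfies X(·,t) ∈ X_{M₀} for all t ∈ [0,τ]; that is, for every t, X(·,t) is supported in the ball of radius p^{M₀} centered at 0 and is constant on every ball of radius p^{−M₀}. -/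
open MeasureTheory Filter

/-- Membership in `X_M`: supported in the ball of radius `p^M` centered at `0` and
constant on every ball of radius `p^{-M}`. -/
def MemXM {p N : ℕ} [Fact p.Prime] (M : ℕ) (g : (Fin N → ℚ_[p]) → ℝ) : Prop :=
  (∀ x : Fin N → ℚ_[p], (p:ℝ) ^ (M:ℤ) < ‖x‖ → g x = 0) ∧
  (∀ x y : Fin N → ℚ_[p], ‖x - y‖ ≤ (p:ℝ) ^ (-(M:ℤ)) → g x = g y)

/-- Continuous-in-time `X_∞`-valued solution of the CNN integral equation. -/
def IsCNNIntegralSolution {p N : ℕ} [Fact p.Prime] [MeasurableSpace (Fin N → ℚ_[p])]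
    (μ : MeasureTheory.Measure (Fin N → ℚ_[p]))
    (A B U Z : (Fin N → ℚ_[p]) → ℝ) (f : ℝ → ℝ) (τ : ℝ)
    (X₀ : (Fin N → ℚ_[p]) → ℝ) (X : (Fin N → ℚ_[p]) → ℝ → ℝ) : Prop :=
  (∀ t ∈ Set.Icc (0:ℝ) τ, MemXInf (fun x => X x t)) ∧
  (∀ t₀ ∈ Set.Icc (0:ℝ) τ, ∀ ε > (0:ℝ), ∃ δ > (0:ℝ), ∀ t ∈ Set.Icc (0:ℝ) τ,
      |t - t₀| < δ → ∀ x : Fin N → ℚ_[p], |X x t - X x t₀| ≤ ε) ∧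
  (∀ t ∈ Set.Icc (0:ℝ) τ, ∀ x : Fin N → ℚ_[p],
      X x t = Real.exp (-t) * X₀ x +
        ∫ s in (0:ℝ)..t, Real.exp (-(t - s)) * Hop μ A B U Z f (fun y => X y s) x)

lemma pnorm_add_le_max {p N : ℕ} [Fact p.Prime] (a b : Fin N → ℚ_[p]) :
    ‖a + b‖ ≤ max ‖a‖ ‖b‖ := by
  refine (pi_norm_le_iff_of_nonneg (le_max_of_le_left (norm_nonneg a))).mpr fun i => ?_
  exact (IsUltrametricDist.norm_add_le_max (a i) (b i)).trans
    (max_le_max (norm_le_pi_norm a i) (norm_le_pi_norm b i))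

lemma pnorm_sub_eq {p N : ℕ} [Fact p.Prime] {a b : Fin N → ℚ_[p]} (h : ‖a‖ < ‖b‖) :
    ‖b - a‖ = ‖b‖ := by
  refine le_antisymm ?_ ?_
  · have := pnorm_add_le_max b (-a)
    simpa [← sub_eq_add_neg, max_eq_left h.le] using this
  · have h2 := pnorm_add_le_max (b - a) a
    rw [sub_add_cancel] at h2
    rcases max_cases ‖b - a‖ ‖a‖ with ⟨he, _⟩ | ⟨he, _⟩
    · rwa [he] at h2
    · rw [he] at h2; exact absurd (lt_of_le_of_lt h2 h) (lt_irrefl _)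

/-- A continuous function on `ℚ_p^N` vanishing at infinity is bounded. -/
lemma memXInf_bounded {p N : ℕ} [Fact p.Prime] {g : (Fin N → ℚ_[p]) → ℝ}
    (hg : Continuous g)
    (hg2 : Tendsto g (comap (fun x : Fin N → ℚ_[p] => ‖x‖) atTop) (nhds 0)) :
    ∃ C, 0 ≤ C ∧ ∀ x, |g x| ≤ C := by
  have h1 : g ⁻¹' Metric.ball 0 1 ∈ comap (fun x : Fin N → ℚ_[p] => ‖x‖) atTop :=
    hg2 (Metric.ball_mem_nhds 0 one_pos)
  rw [mem_comap] at h1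
  obtain ⟨S, hS, hSsub⟩ := h1
  rw [mem_atTop_sets] at hS
  obtain ⟨R, hR⟩ := hS
  obtain ⟨C₀, hC₀⟩ :=
    (isCompact_closedBall (0 : Fin N → ℚ_[p]) R).exists_bound_of_continuousOn hg.continuousOn
  refine ⟨max C₀ 1, le_trans zero_le_one (le_max_right _ _), fun x => ?_⟩
  rcases le_or_gt ‖x‖ R with hx | hx
  · have : x ∈ Metric.closedBall (0 : Fin N → ℚ_[p]) R := by
      simpa [Metric.mem_closedBall, dist_zero_right] using hx
    exact le_trans (by simpa using hC₀ x this) (le_max_left _ _)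
  · have hxS : x ∈ (fun x : Fin N → ℚ_[p] => ‖x‖) ⁻¹' S := hR ‖x‖ hx.le
    have := hSsub hxS
    simp only [Set.mem_preimage, Metric.mem_ball, dist_zero_right, Real.norm_eq_abs] at this
    exact le_trans this.le (le_max_right _ _)

/-- A function in `X_M` is continuous and bounded. -/
lemma memXM_cont_bdd {p N : ℕ} [Fact p.Prime] {M : ℕ} {g : (Fin N → ℚ_[p]) → ℝ}
    (hg1 : ∀ x : Fin N → ℚ_[p], (p:ℝ) ^ (M:ℤ) < ‖x‖ → g x = 0)
    (hg2 : ∀ x y : Fin N → ℚ_[p], ‖x - y‖ ≤ (p:ℝ) ^ (-(M:ℤ)) → g x = g y) :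
    Continuous g ∧ ∃ c, 0 ≤ c ∧ ∀ x, |g x| ≤ c := by
  have hp : (0:ℝ) < p := by exact_mod_cast (Fact.out : p.Prime).pos
  have hrpos : (0:ℝ) < (p:ℝ) ^ (-(M:ℤ)) := zpow_pos hp _
  have hcont : Continuous g := by
    refine continuous_iff_continuousAt.mpr fun x => ?_
    have hev : g =ᶠ[nhds x] fun _ => g x := by
      filter_upwards [Metric.ball_mem_nhds x hrpos] with y hy
      have : ‖y - x‖ ≤ (p:ℝ) ^ (-(M:ℤ)) := by
        rw [← dist_eq_norm]; exact le_of_lt (by simpa [Metric.mem_ball] using hy)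
      exact hg2 y x this
    exact hev.continuousAt
  refine ⟨hcont, ?_⟩
  obtain ⟨C₀, hC₀⟩ := (isCompact_closedBall (0 : Fin N → ℚ_[p]) ((p:ℝ) ^ (M:ℤ))).exists_bound_of_continuousOn
    hcont.continuousOn
  have h0mem : (0 : Fin N → ℚ_[p]) ∈ Metric.closedBall (0 : Fin N → ℚ_[p]) ((p:ℝ) ^ (M:ℤ)) := by
    simp [Metric.mem_closedBall, le_of_lt (zpow_pos hp _)]
  refine ⟨C₀, le_trans (norm_nonneg _) (hC₀ 0 h0mem), fun x => ?_⟩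
  rcases le_or_gt ‖x‖ ((p:ℝ) ^ (M:ℤ)) with hx | hx
  · simpa using hC₀ x (by simpa [Metric.mem_closedBall, dist_zero_right] using hx)
  · rw [hg1 x hx]; simpa using le_trans (norm_nonneg _) (hC₀ 0 h0mem)
/-- If `A`, `B` are radial integrable functions supported in
`{‖x‖ ≤ p^{M₀}}` and `U, Z, X₀ ∈ X_{M₀}`, then the solution of the integral equation
stays in `X_{M₀}` for all `t ∈ [0,τ]`. -/
theorem stmt5 (p N : ℕ) [Fact p.Prime] (hN : 1 ≤ N) (M₀ : ℕ)
    [MeasurableSpace (Fin N → ℚ_[p])] [BorelSpace (Fin N → ℚ_[p])]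
    (μ : Measure (Fin N → ℚ_[p])) [μ.IsAddHaarMeasure]
    (hμ : μ {x : Fin N → ℚ_[p] | ‖x‖ ≤ 1} = 1)
    (A B : (Fin N → ℚ_[p]) → ℝ) (hArad : IsRadial A) (hBrad : IsRadial B)
    (hA : Integrable A μ) (hB : Integrable B μ)
    (hAsupp : ∀ x : Fin N → ℚ_[p], (p:ℝ) ^ (M₀:ℤ) < ‖x‖ → A x = 0)
    (hBsupp : ∀ x : Fin N → ℚ_[p], (p:ℝ) ^ (M₀:ℤ) < ‖x‖ → B x = 0)
    (U Z : (Fin N → ℚ_[p]) → ℝ) (hU : MemXM M₀ U) (hZ : MemXM M₀ Z)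
    (f : ℝ → ℝ) (L : NNReal) (hf : LipschitzWith L f) (hf0 : f 0 = 0)
    (τ : ℝ) (hτ : 0 < τ)
    (X₀ : (Fin N → ℚ_[p]) → ℝ) (hX₀ : MemXM M₀ X₀)
    (X : (Fin N → ℚ_[p]) → ℝ → ℝ)
    (hX : IsCNNIntegralSolution μ A B U Z f τ X₀ X) :
    ∀ t ∈ Set.Icc (0:ℝ) τ, MemXM M₀ (fun x => X x t) := by
  obtain ⟨hXmem, hXcont, hXeq⟩ := hX
  have hp : (0:ℝ) < p := by exact_mod_cast (Fact.out : p.Prime).pos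
  -- global bound C on |X x t| for t ∈ [0, τ]
  obtain ⟨C, hC0, Cbound⟩ :
      ∃ C, 0 ≤ C ∧ ∀ t ∈ Set.Icc (0:ℝ) τ, ∀ x, |X x t| ≤ C := by
    set g : ℝ → ℝ := fun t => sSup (Set.range fun x : Fin N → ℚ_[p] => |X x t|) with hgdef
    have hne : ∀ t : ℝ, (Set.range fun x : Fin N → ℚ_[p] => |X x t|).Nonempty :=
      fun t => ⟨_, ⟨0, rfl⟩⟩
    have hbdd : ∀ t ∈ Set.Icc (0:ℝ) τ,
        BddAbove (Set.range fun x : Fin N → ℚ_[p] => |X x t|) := by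
      intro t ht
      obtain ⟨c, _, hc⟩ := memXInf_bounded (hXmem t ht).1 (hXmem t ht).2
      exact ⟨c, by rintro _ ⟨x, rfl⟩; exact hc x⟩
    have hle : ∀ t ∈ Set.Icc (0:ℝ) τ, ∀ x, |X x t| ≤ g t :=
      fun t ht x => le_csSup (hbdd t ht) ⟨x, rfl⟩
    have hgcont : ContinuousOn g (Set.Icc 0 τ) := by
      intro t₀ ht₀
      rw [Metric.continuousWithinAt_iff]
      intro ε hε
      obtain ⟨δ, hδ, hδ2⟩ := hXcont t₀ ht₀ (ε/2) (half_pos hε)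
      refine ⟨δ, hδ, fun t ht hdist => ?_⟩
      rw [Real.dist_eq] at hdist ⊢
      have h1 : g t ≤ g t₀ + ε/2 := by
        refine csSup_le (hne t) ?_
        rintro _ ⟨x, rfl⟩
        have := hδ2 t ht hdist x
        have h3 : |X x t| ≤ |X x t₀| + ε/2 := by
          calc |X x t| = |X x t₀ + (X x t - X x t₀)| := by ring_nf
            _ ≤ |X x t₀| + |X x t - X x t₀| := abs_add_le _ _
            _ ≤ |X x t₀| + ε/2 := by linarith
        exact h3.trans (by have := hle t₀ ht₀ x; linarith)
      have h2 : g t₀ ≤ g t + ε/2 := by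
        refine csSup_le (hne t₀) ?_
        rintro _ ⟨x, rfl⟩
        have := hδ2 t ht hdist x
        have h3 : |X x t₀| ≤ |X x t| + ε/2 := by
          calc |X x t₀| = |X x t + (X x t₀ - X x t)| := by ring_nf
            _ ≤ |X x t| + |X x t₀ - X x t| := abs_add_le _ _
            _ ≤ |X x t| + ε/2 := by rw [abs_sub_comm]; linarith
        exact h3.trans (by have := hle t ht x; linarith)
      have : |g t - g t₀| ≤ ε/2 := abs_sub_le_iff.mpr ⟨by linarith, by linarith⟩
      linarith
    obtain ⟨C, hC⟩ := isCompact_Icc.exists_bound_of_continuousOn hgcont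
    have h0 : (0:ℝ) ∈ Set.Icc (0:ℝ) τ := ⟨le_rfl, hτ.le⟩
    refine ⟨C, ?_, fun t ht x => (hle t ht x).trans ((le_abs_self _).trans (by simpa using hC t ht))⟩
    exact le_trans (abs_nonneg (X 0 0))
      ((hle 0 h0 0).trans ((le_abs_self _).trans (by simpa using hC 0 h0)))
  -- notation
  set IA : ℝ := ∫ z, |A z| ∂μ with hIAdef
  have hIA0 : 0 ≤ IA := integral_nonneg fun z => abs_nonneg _
  set K : ℝ := (L:ℝ) * IA with hKdef
  have hK0 : 0 ≤ K := mul_nonneg L.coe_nonneg hIA0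
  -- translation facts
  have hAtrans : ∀ x : Fin N → ℚ_[p], Integrable (fun z => A (x - z)) μ := by
    intro x
    have := ((Measure.measurePreserving_sub_left μ x).integrable_comp hA.aestronglyMeasurable).mpr hA
    exact this
  have hIAx : ∀ x : Fin N → ℚ_[p], ∫ z, |A (x - z)| ∂μ = IA := by
    intro x
    simpa using integral_sub_left_eq_self (fun z => |A z|) μ x
  have hAmulInt : ∀ (x : Fin N → ℚ_[p]) (g : (Fin N → ℚ_[p]) → ℝ),
      AEStronglyMeasurable g μ → (∃ c, ∀ z, ‖g z‖ ≤ c) →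
      Integrable (fun z => A (x - z) * g z) μ := by
    intro x g hgm hgb
    exact (Integrable.bdd_mul (hAtrans x) hgm (ae_of_all _ hgb.choose_spec)).congr
      (Filter.Eventually.of_forall fun z => mul_comm _ _)
  -- Lipschitz facts
  have hfb : ∀ r : ℝ, |f r| ≤ (L:ℝ) * |r| := by
    intro r
    have := hf.dist_le_mul r 0
    simpa [hf0, Real.dist_eq] using this
  have hfdiff : ∀ a b : ℝ, |f a - f b| ≤ (L:ℝ) * |a - b| := by
    intro a b
    have := hf.dist_le_mul a b
    simpa [Real.dist_eq] using this
  -- measurability and integrability of the integrands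
  have hfXmeas : ∀ s ∈ Set.Icc (0:ℝ) τ, ∀ w : Fin N → ℚ_[p],
      AEStronglyMeasurable (fun z : Fin N → ℚ_[p] => f (X (z - w) s)) μ := by
    intro s hs w
    exact (hf.continuous.comp ((hXmem s hs).1.comp (continuous_id.sub continuous_const))).aestronglyMeasurable
  have hfXbd : ∀ s ∈ Set.Icc (0:ℝ) τ, ∀ w : Fin N → ℚ_[p], ∀ z : Fin N → ℚ_[p],
      ‖f (X (z - w) s)‖ ≤ (L:ℝ) * C := by
    intro s hs w z
    calc ‖f (X (z - w) s)‖ = |f (X (z - w) s)| := rfl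
      _ ≤ (L:ℝ) * |X (z - w) s| := hfb _
      _ ≤ (L:ℝ) * C := by
          exact mul_le_mul_of_nonneg_left (Cbound s hs _) L.coe_nonneg
  have hAfint : ∀ s ∈ Set.Icc (0:ℝ) τ, ∀ x w : Fin N → ℚ_[p],
      Integrable (fun z => A (x - z) * f (X (z - w) s)) μ := by
    intro s hs x w
    exact hAmulInt x _ (hfXmeas s hs w) ⟨(L:ℝ) * C, hfXbd s hs w⟩
  -- continuity in time of the A-term
  have hATcont : ∀ x : Fin N → ℚ_[p],
      ContinuousOn (fun s => ∫ z, A (x - z) * f (X z s) ∂μ) (Set.Icc 0 τ) := by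
    intro x s₀ hs₀
    rw [Metric.continuousWithinAt_iff]
    intro ε hε
    have hden : (0:ℝ) < K + 1 := by linarith
    set ε₁ : ℝ := ε / (2 * (K + 1)) with hε₁def
    have hε₁ : 0 < ε₁ := by positivity
    obtain ⟨δ, hδ, hδ2⟩ := hXcont s₀ hs₀ ε₁ hε₁
    refine ⟨δ, hδ, fun s hs hdist => ?_⟩
    rw [Real.dist_eq] at hdist ⊢
    have hint1 : Integrable (fun z => A (x - z) * f (X z s)) μ := by
      simpa using hAfint s hs x 0
    have hint2 : Integrable (fun z => A (x - z) * f (X z s₀)) μ := by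
      simpa using hAfint s₀ hs₀ x 0
    have hsub : (∫ z, A (x - z) * f (X z s) ∂μ) - ∫ z, A (x - z) * f (X z s₀) ∂μ
        = ∫ z, A (x - z) * (f (X z s) - f (X z s₀)) ∂μ := by
      rw [← integral_sub hint1 hint2]; simp_rw [mul_sub]
    rw [hsub]
    have hptwise : ∀ z, ‖A (x - z) * (f (X z s) - f (X z s₀))‖ ≤ |A (x - z)| * ((L:ℝ) * ε₁) := by
      intro z
      rw [Real.norm_eq_abs, abs_mul]
      exact mul_le_mul_of_nonneg_left ((hfdiff _ _).trans
        (mul_le_mul_of_nonneg_left (hδ2 s hs hdist z) L.coe_nonneg)) (abs_nonneg _)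
    have hcalc : |∫ z, A (x - z) * (f (X z s) - f (X z s₀)) ∂μ| ≤ K * ε₁ := by
      calc |∫ z, A (x - z) * (f (X z s) - f (X z s₀)) ∂μ|
          ≤ ∫ z, ‖A (x - z) * (f (X z s) - f (X z s₀))‖ ∂μ := by
            rw [← Real.norm_eq_abs]; exact norm_integral_le_integral_norm _
        _ ≤ ∫ z, |A (x - z)| * ((L:ℝ) * ε₁) ∂μ :=
            integral_mono_of_nonneg (Filter.Eventually.of_forall fun z => norm_nonneg _)
              ((hAtrans x).abs.mul_const _) (Filter.Eventually.of_forall hptwise)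
        _ = IA * ((L:ℝ) * ε₁) := by rw [integral_mul_const, hIAx x]
        _ = K * ε₁ := by rw [hKdef]; ring
    have h1 : K * ε₁ ≤ (K + 1) * ε₁ := by nlinarith
    have h2 : (K + 1) * ε₁ = ε / 2 := by rw [hε₁def]; field_simp
    linarith
  -- interval integrability of the full time integrand
  have hATint : ∀ (x : Fin N → ℚ_[p]), ∀ t ∈ Set.Icc (0:ℝ) τ,
      IntervalIntegrable
        (fun s => Real.exp (-(t - s)) * Hop μ A B U Z f (fun y => X y s) x) volume 0 t := by
    intro x t ht
    have hsub : Set.uIcc (0:ℝ) t ⊆ Set.Icc 0 τ := by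
      rw [Set.uIcc_of_le ht.1]
      exact Set.Icc_subset_Icc le_rfl ht.2
    have hco : ContinuousOn
        (fun s => Real.exp (-(t - s)) * Hop μ A B U Z f (fun y => X y s) x)
        (Set.uIcc (0:ℝ) t) := by
      simp only [Hop]
      exact ((Real.continuous_exp.comp ((continuous_const.sub continuous_id).neg)).continuousOn).mul
        ((((hATcont x).mono hsub).add continuousOn_const).add continuousOn_const)
    exact hco.intervalIntegrable
  -- the key induction
  set Rb : ℝ := (p:ℝ) ^ (M₀:ℤ) with hRbdef
  set rs : ℝ := (p:ℝ) ^ (-(M₀:ℤ)) with hrsdef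
  have key : ∀ (n : ℕ), ∀ t ∈ Set.Icc (0:ℝ) τ,
      (∀ x y : Fin N → ℚ_[p], ‖x - y‖ ≤ rs →
        |X x t - X y t| ≤ 2*C * (K*t)^n / n.factorial) ∧
      (∀ x : Fin N → ℚ_[p], Rb < ‖x‖ →
        |X x t| ≤ 2*C * (K*t)^n / n.factorial) := by
    intro n
    induction n with
    | zero =>
      intro t ht
      simp only [pow_zero, Nat.factorial_zero, Nat.cast_one, mul_one, div_one]
      constructor
      · intro x y _
        calc |X x t - X y t| ≤ |X x t| + |X y t| := by
              simpa [Real.norm_eq_abs] using norm_sub_le (X x t) (X y t)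
          _ ≤ 2 * C := by
              have h1 := Cbound t ht x; have h2 := Cbound t ht y; linarith
      · intro x _
        have := Cbound t ht x; linarith
    | succ n ih =>
      intro t ht
      obtain ⟨ht0, htτ⟩ := ht
      have hgbint : IntervalIntegrable
          (fun s => 2*C*K^(n+1)/(n.factorial : ℝ) * s^n) volume 0 t :=
        (continuous_const.mul (continuous_pow n)).intervalIntegrable 0 t
      have hgbval : (∫ s in (0:ℝ)..t, 2*C*K^(n+1)/(n.factorial : ℝ) * s^n)
          = 2*C*(K*t)^(n+1) / ((n+1).factorial : ℝ) := by
        rw [intervalIntegral.integral_const_mul, integral_pow]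
        have hfac : (((n+1).factorial : ℕ) : ℝ) = ((n:ℝ)+1) * (n.factorial : ℝ) := by
          rw [Nat.factorial_succ]; push_cast; ring
        have hnfac : ((n.factorial : ℕ) : ℝ) ≠ 0 :=
          Nat.cast_ne_zero.mpr n.factorial_ne_zero
        rw [hfac]
        have hn1 : ((n:ℝ) + 1) ≠ 0 := by positivity
        field_simp
        ring
      have hbound_nonneg : 0 ≤ 2*C*(K*t)^(n+1) / ((n+1).factorial : ℝ) := by
        apply div_nonneg _ (Nat.cast_nonneg _)
        exact mul_nonneg (by linarith) (pow_nonneg (mul_nonneg hK0 ht0) _)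
      constructor
      · intro x y hxy
        have hX0xy : X₀ x = X₀ y := hX₀.2 x y hxy
        have hFbound : ∀ s ∈ Set.Ioc (0:ℝ) t,
            ‖Real.exp (-(t - s)) * Hop μ A B U Z f (fun y' => X y' s) x
              - Real.exp (-(t - s)) * Hop μ A B U Z f (fun y' => X y' s) y‖
            ≤ 2*C*K^(n+1)/(n.factorial : ℝ) * s^n := by
          intro s hs
          have hsIcc : s ∈ Set.Icc (0:ℝ) τ := ⟨hs.1.le, hs.2.trans htτ⟩
          set Dn : ℝ := 2*C * (K*s)^n / (n.factorial : ℝ) with hDndef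
          have hBeq : (∫ z, B (x - z) * U z ∂μ) = ∫ z, B (y - z) * U z ∂μ := by
            have h1 := integral_add_right_eq_self (μ := μ)
              (fun z => B (x - z) * U z) (x - y)
            calc (∫ z, B (x - z) * U z ∂μ)
                = ∫ z, B (x - (z + (x - y))) * U (z + (x - y)) ∂μ := h1.symm
              _ = ∫ z, B (y - z) * U z ∂μ := by
                  refine integral_congr_ae (Filter.Eventually.of_forall fun z => ?_)
                  have e1 : x - (z + (x - y)) = y - z := by abel
                  have e3 : z + (x - y) - z = x - y := by abel
                  have e2 : U (z + (x - y)) = U z := hU.2 _ _ (by rw [e3]; exact hxy)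
                  dsimp only
                  rw [e1, e2]
          have hAy : (∫ z, A (y - z) * f (X z s) ∂μ)
              = ∫ z, A (x - z) * f (X (z - (x - y)) s) ∂μ := by
            have h1 := integral_add_right_eq_self (μ := μ)
              (fun z => A (x - z) * f (X (z - (x - y)) s)) (x - y)
            calc (∫ z, A (y - z) * f (X z s) ∂μ)
                = ∫ z, A (x - (z + (x - y))) * f (X (z + (x - y) - (x - y)) s) ∂μ := by
                  refine integral_congr_ae (Filter.Eventually.of_forall fun z => ?_)
                  have e1 : x - (z + (x - y)) = y - z := by abel
                  have e2 : z + (x - y) - (x - y) = z := by abel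
                  dsimp only
                  rw [e1, e2]
              _ = _ := h1
          have hint1 : Integrable (fun z => A (x - z) * f (X z s)) μ := by
            simpa using hAfint s hsIcc x 0
          have hint2 : Integrable (fun z => A (x - z) * f (X (z - (x - y)) s)) μ :=
            hAfint s hsIcc x (x - y)
          have hHdiff : Hop μ A B U Z f (fun y' => X y' s) x
                - Hop μ A B U Z f (fun y' => X y' s) y
              = ∫ z, A (x - z) * (f (X z s) - f (X (z - (x - y)) s)) ∂μ := by
            simp only [Hop]
            rw [hZ.2 x y hxy, hBeq, hAy]
            simp_rw [mul_sub]
            rw [integral_sub hint1 hint2]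
            ring
          have hHbd : |Hop μ A B U Z f (fun y' => X y' s) x
              - Hop μ A B U Z f (fun y' => X y' s) y| ≤ K * Dn := by
            rw [hHdiff]
            calc |∫ z, A (x - z) * (f (X z s) - f (X (z - (x - y)) s)) ∂μ|
                ≤ ∫ z, ‖A (x - z) * (f (X z s) - f (X (z - (x - y)) s))‖ ∂μ := by
                  rw [← Real.norm_eq_abs]; exact norm_integral_le_integral_norm _
              _ ≤ ∫ z, |A (x - z)| * ((L:ℝ) * Dn) ∂μ := by
                  refine integral_mono_of_nonneg
                    (Filter.Eventually.of_forall fun z => norm_nonneg _)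
                    ((hAtrans x).abs.mul_const _)
                    (Filter.Eventually.of_forall fun z => ?_)
                  dsimp only
                  rw [Real.norm_eq_abs, abs_mul]
                  refine mul_le_mul_of_nonneg_left ?_ (abs_nonneg _)
                  refine (hfdiff _ _).trans (mul_le_mul_of_nonneg_left ?_ L.coe_nonneg)
                  have hzz : ‖z - (z - (x - y))‖ ≤ rs := by
                    have e : z - (z - (x - y)) = x - y := by abel
                    rw [e]; exact hxy
                  exact (ih s hsIcc).1 z (z - (x - y)) hzz
              _ = IA * ((L:ℝ) * Dn) := by rw [integral_mul_const, hIAx x]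
              _ = K * Dn := by rw [hKdef]; ring
          have hexp : Real.exp (-(t - s)) ≤ 1 := by
            rw [show (1:ℝ) = Real.exp 0 from (Real.exp_zero).symm]
            exact Real.exp_le_exp.mpr (by linarith [hs.2])
          calc ‖Real.exp (-(t - s)) * Hop μ A B U Z f (fun y' => X y' s) x
              - Real.exp (-(t - s)) * Hop μ A B U Z f (fun y' => X y' s) y‖
              = Real.exp (-(t - s)) * |Hop μ A B U Z f (fun y' => X y' s) x
                  - Hop μ A B U Z f (fun y' => X y' s) y| := by
                rw [← mul_sub, Real.norm_eq_abs, abs_mul, abs_of_pos (Real.exp_pos _)]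
            _ ≤ 1 * (K * Dn) := by
                refine mul_le_mul hexp hHbd (abs_nonneg _) zero_le_one
            _ = 2*C*K^(n+1)/(n.factorial : ℝ) * s^n := by
                rw [one_mul, hDndef, mul_pow]; ring
        rw [hXeq t ⟨ht0, htτ⟩ x, hXeq t ⟨ht0, htτ⟩ y, hX0xy, add_sub_add_left_eq_sub,
          ← intervalIntegral.integral_sub (hATint x t ⟨ht0, htτ⟩) (hATint y t ⟨ht0, htτ⟩)]
        have hae : ∀ᵐ s ∂(volume.restrict (Set.uIoc (0:ℝ) t)),
            ‖Real.exp (-(t - s)) * Hop μ A B U Z f (fun y' => X y' s) x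
              - Real.exp (-(t - s)) * Hop μ A B U Z f (fun y' => X y' s) y‖
            ≤ 2*C*K^(n+1)/(n.factorial : ℝ) * s^n := by
          refine (ae_restrict_iff' measurableSet_uIoc).mpr
            (Filter.Eventually.of_forall fun s hs => hFbound s ?_)
          rwa [Set.uIoc_of_le ht0] at hs
        calc |∫ s in (0:ℝ)..t,
              (Real.exp (-(t - s)) * Hop μ A B U Z f (fun y' => X y' s) x
                - Real.exp (-(t - s)) * Hop μ A B U Z f (fun y' => X y' s) y)|
            = ‖∫ s in (0:ℝ)..t,
              (Real.exp (-(t - s)) * Hop μ A B U Z f (fun y' => X y' s) x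
                - Real.exp (-(t - s)) * Hop μ A B U Z f (fun y' => X y' s) y)‖ :=
              (Real.norm_eq_abs _).symm
          _ ≤ |∫ s in (0:ℝ)..t, 2*C*K^(n+1)/(n.factorial : ℝ) * s^n| :=
              intervalIntegral.norm_integral_le_abs_of_norm_le hae hgbint
          _ = 2*C*(K*t)^(n+1) / ((n+1).factorial : ℝ) := by
              rw [hgbval, abs_of_nonneg hbound_nonneg]
      · intro x hx
        have hFbound : ∀ s ∈ Set.Ioc (0:ℝ) t,
            ‖Real.exp (-(t - s)) * Hop μ A B U Z f (fun y' => X y' s) x‖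
            ≤ 2*C*K^(n+1)/(n.factorial : ℝ) * s^n := by
          intro s hs
          have hsIcc : s ∈ Set.Icc (0:ℝ) τ := ⟨hs.1.le, hs.2.trans htτ⟩
          set Dn : ℝ := 2*C * (K*s)^n / (n.factorial : ℝ) with hDndef
          have hDn0 : 0 ≤ Dn := by
            apply div_nonneg _ (Nat.cast_nonneg _)
            exact mul_nonneg (by linarith) (pow_nonneg (mul_nonneg hK0 hs.1.le) _)
          have hZx : Z x = 0 := hZ.1 x hx
          have hB0 : (∫ z, B (x - z) * U z ∂μ) = 0 := by
            have hzero : ∀ z, B (x - z) * U z = 0 := by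
              intro z
              rcases le_or_gt ‖z‖ Rb with hz | hz
              · have hlt : ‖z‖ < ‖x‖ := lt_of_le_of_lt hz hx
                have he : ‖x - z‖ = ‖x‖ := pnorm_sub_eq hlt
                rw [hBsupp (x - z) (by rw [he]; exact hx), zero_mul]
              · rw [hU.1 z hz, mul_zero]
            simp only [hzero, integral_zero]
          have hAbd : |∫ z, A (x - z) * f (X z s) ∂μ| ≤ K * Dn := by
            calc |∫ z, A (x - z) * f (X z s) ∂μ|
                ≤ ∫ z, ‖A (x - z) * f (X z s)‖ ∂μ := by
                  rw [← Real.norm_eq_abs]; exact norm_integral_le_integral_norm _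
              _ ≤ ∫ z, |A (x - z)| * ((L:ℝ) * Dn) ∂μ := by
                  refine integral_mono_of_nonneg
                    (Filter.Eventually.of_forall fun z => norm_nonneg _)
                    ((hAtrans x).abs.mul_const _)
                    (Filter.Eventually.of_forall fun z => ?_)
                  dsimp only
                  rcases le_or_gt ‖x - z‖ Rb with hz | hz
                  · have hlt : ‖x - z‖ < ‖x‖ := lt_of_le_of_lt hz hx
                    have he : ‖x - (x - z)‖ = ‖x‖ := pnorm_sub_eq hlt
                    have e : x - (x - z) = z := by abel
                    rw [e] at he
                    have hzn : Rb < ‖z‖ := by rw [he]; exact hx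
                    rw [Real.norm_eq_abs, abs_mul]
                    refine mul_le_mul_of_nonneg_left ?_ (abs_nonneg _)
                    exact (hfb _).trans
                      (mul_le_mul_of_nonneg_left ((ih s hsIcc).2 z hzn) L.coe_nonneg)
                  · rw [hAsupp (x - z) hz]; simp
              _ = IA * ((L:ℝ) * Dn) := by rw [integral_mul_const, hIAx x]
              _ = K * Dn := by rw [hKdef]; ring
          have hexp : Real.exp (-(t - s)) ≤ 1 := by
            rw [show (1:ℝ) = Real.exp 0 from (Real.exp_zero).symm]
            exact Real.exp_le_exp.mpr (by linarith [hs.2])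
          calc ‖Real.exp (-(t - s)) * Hop μ A B U Z f (fun y' => X y' s) x‖
              = Real.exp (-(t - s)) * |Hop μ A B U Z f (fun y' => X y' s) x| := by
                rw [Real.norm_eq_abs, abs_mul, abs_of_pos (Real.exp_pos _)]
            _ ≤ 1 * (K * Dn) := by
                refine mul_le_mul hexp ?_ (abs_nonneg _) zero_le_one
                simp only [Hop, hZx, hB0, add_zero]
                exact hAbd
            _ = 2*C*K^(n+1)/(n.factorial : ℝ) * s^n := by
                rw [one_mul, hDndef, mul_pow]; ring
        rw [hXeq t ⟨ht0, htτ⟩ x, hX₀.1 x hx, mul_zero, zero_add]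
        have hae : ∀ᵐ s ∂(volume.restrict (Set.uIoc (0:ℝ) t)),
            ‖Real.exp (-(t - s)) * Hop μ A B U Z f (fun y' => X y' s) x‖
            ≤ 2*C*K^(n+1)/(n.factorial : ℝ) * s^n := by
          refine (ae_restrict_iff' measurableSet_uIoc).mpr
            (Filter.Eventually.of_forall fun s hs => hFbound s ?_)
          rwa [Set.uIoc_of_le ht0] at hs
        calc |∫ s in (0:ℝ)..t,
              Real.exp (-(t - s)) * Hop μ A B U Z f (fun y' => X y' s) x|
            = ‖∫ s in (0:ℝ)..t,
              Real.exp (-(t - s)) * Hop μ A B U Z f (fun y' => X y' s) x‖ :=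
              (Real.norm_eq_abs _).symm
          _ ≤ |∫ s in (0:ℝ)..t, 2*C*K^(n+1)/(n.factorial : ℝ) * s^n| :=
              intervalIntegral.norm_integral_le_abs_of_norm_le hae hgbint
          _ = 2*C*(K*t)^(n+1) / ((n+1).factorial : ℝ) := by
              rw [hgbval, abs_of_nonneg hbound_nonneg]
  -- conclusion via `n → ∞`
  intro t ht
  have hlim : Tendsto (fun n : ℕ => 2*C * (K*t)^n / (n.factorial : ℝ)) atTop (nhds 0) := by
    have h := (Real.summable_pow_div_factorial (K*t)).tendsto_atTop_zero
    have h2 := h.const_mul (2*C)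
    simp only [mul_zero] at h2
    simpa [mul_div_assoc] using h2
  constructor
  · intro x hx
    have h : ∀ n : ℕ, |X x t| ≤ 2*C * (K*t)^n / (n.factorial : ℝ) :=
      fun n => (key n t ht).2 x hx
    have h0 : |X x t| ≤ 0 := ge_of_tendsto hlim (Filter.Eventually.of_forall h)
    exact abs_nonpos_iff.mp h0
  · intro x y hxy
    have h : ∀ n : ℕ, |X x t - X y t| ≤ 2*C * (K*t)^n / (n.factorial : ℝ) :=
      fun n => (key n t ht).1 x y hxy
    have h0 : |X x t - X y t| ≤ 0 := ge_of_tendsto hlim (Filter.Eventually.of_forall h)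
    exact sub_eq_zero.mp (abs_nonpos_iff.mp h0)
end

section
/- Let A, B : ℚ_p^N → ℝ be radial integrable functions, U, Z ∈ X_∞, and f : ℝ → ℝ Lipschitz with constant L(f) and f(0) = 0. If ‖A‖_{L¹} L(f) < 1, then there exists a unique X_stat ∈ X_∞ satisfying the stationary-state equation X_stat(x) = ∫_{ℚ_p^N} A(‖x−y‖_p) f(X_stat(y)) d^N y + ∫_{ℚ_p^N} B(‖x−y‖_p) U(y) d^N y + Z(x) for all x ∈ ℚ_p^N. -/
open MeasureTheory Filter

open Topology

section AuxLemmas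
set_option linter.unusedSectionVars false


section Ultra
variable {p N : ℕ} [hp : Fact p.Prime]

lemma ultra_add (a b : Fin N → ℚ_[p]) : ‖a + b‖ ≤ max ‖a‖ ‖b‖ := by
  refine (pi_norm_le_iff_of_nonneg (le_max_of_le_left (norm_nonneg a))).2 fun i => ?_
  calc ‖(a + b) i‖ = ‖a i + b i‖ := rfl
    _ ≤ max ‖a i‖ ‖b i‖ := Padic.nonarchimedean _ _
    _ ≤ max ‖a‖ ‖b‖ := max_le_max (norm_le_pi_norm a i) (norm_le_pi_norm b i)

lemma ultra_eq {a b : Fin N → ℚ_[p]} (h : ‖b‖ < ‖a‖) : ‖a + b‖ = ‖a‖ := by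
  refine le_antisymm ((ultra_add a b).trans_eq (max_eq_left h.le)) ?_
  have h2 : ‖a‖ ≤ max ‖a + b‖ ‖b‖ := by
    simpa using ultra_add (a + b) (-b)
  rcases max_cases ‖a + b‖ ‖b‖ with ⟨he, _⟩ | ⟨he, _⟩
  · rwa [he] at h2
  · rw [he] at h2; linarith

end Ultra

section Meas
variable {p N : ℕ} [hp : Fact p.Prime]
  [MeasurableSpace (Fin N → ℚ_[p])] [BorelSpace (Fin N → ℚ_[p])]
  (μ : Measure (Fin N → ℚ_[p])) [μ.IsAddHaarMeasure]
  {A : (Fin N → ℚ_[p]) → ℝ}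

lemma meas_ball (r : ℝ) : MeasurableSet {z : Fin N → ℚ_[p] | ‖z‖ ≤ r} :=
  (isClosed_le continuous_norm continuous_const).measurableSet

lemma meas_tail (r : ℝ) : MeasurableSet {z : Fin N → ℚ_[p] | r < ‖z‖} :=
  (isOpen_lt continuous_const continuous_norm).measurableSet

lemma indicator_shift (x : Fin N → ℚ_[p]) {s : Set (Fin N → ℚ_[p])} (hs : MeasurableSet s) :
    (∫ y, s.indicator (fun z => |A z|) (x - y) ∂μ) = ∫ z in s, |A z| ∂μ := by
  rw [integral_sub_left_eq_self (s.indicator fun z => |A z|) μ x, integral_indicator hs]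

lemma haar_noAtoms (hN : 1 ≤ N) : NullSingletonClass μ := by
  haveI : Nonempty (Fin N) := ⟨⟨0, hN⟩⟩
  have hdiag : Tendsto (fun c : ℚ_[p] => (fun _ : Fin N => c)) (𝓝[≠] (0 : ℚ_[p]))
      (𝓝[≠] (0 : Fin N → ℚ_[p])) := by
    rw [tendsto_nhdsWithin_iff]
    constructor
    · have hc : Continuous (fun c : ℚ_[p] => (fun _ : Fin N => c)) :=
        continuous_pi fun _ => continuous_id
      have h2 := (hc.tendsto 0).mono_left (nhdsWithin_le_nhds (s := {(0:ℚ_[p])}ᶜ))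
      have h00 : (fun _ : Fin N => (0 : ℚ_[p])) = 0 := rfl
      rwa [h00] at h2
    · filter_upwards [eventually_mem_nhdsWithin] with c hc
      simp only [Set.mem_compl_iff, Set.mem_singleton_iff] at hc ⊢
      intro h
      exact hc (congrFun h (Classical.arbitrary (Fin N)))
  haveI : NeBot (𝓝[≠] (0 : Fin N → ℚ_[p])) := hdiag.neBot
  infer_instance

lemma shrink (hA : Integrable A μ) (hN : 1 ≤ N) {ε : ℝ} (hε : 0 < ε) :
    ∃ δ : ℝ, 0 < δ ∧ (∫ z in {z : Fin N → ℚ_[p] | ‖z‖ ≤ δ}, |A z| ∂μ) < ε := by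
  haveI := haar_noAtoms μ hN
  have hp1 : (1:ℝ) < (p:ℝ) := by exact_mod_cast hp.out.one_lt
  have hδ : Tendsto (fun n : ℕ => ((p:ℝ)⁻¹) ^ n) atTop (𝓝 0) :=
    tendsto_pow_atTop_nhds_zero_of_lt_one (by positivity) (by
      rw [inv_lt_one_iff₀]; right; exact hp1)
  have h0 : ∀ᵐ z ∂μ, z ≠ (0 : Fin N → ℚ_[p]) := by
    have hs : μ {(0 : Fin N → ℚ_[p])} = 0 := measure_singleton _
    rw [ae_iff]
    simpa only [not_not, Set.setOf_eq_eq_singleton] using hs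
  have hconv : Tendsto (fun n : ℕ =>
      ∫ z, ({z : Fin N → ℚ_[p] | ‖z‖ ≤ ((p:ℝ)⁻¹) ^ n}.indicator (fun z => |A z|)) z ∂μ)
      atTop (𝓝 (∫ _z, (0:ℝ) ∂μ)) := by
    apply tendsto_integral_of_dominated_convergence (fun z => |A z|)
    · intro n
      exact (hA.abs.indicator (meas_ball _)).aestronglyMeasurable
    · exact hA.abs
    · intro n
      filter_upwards with z
      rw [Real.norm_eq_abs]
      refine abs_le.2 ⟨?_, ?_⟩
      · refine neg_nonpos.2 (abs_nonneg _) |>.trans ?_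
        exact Set.indicator_nonneg (fun _ _ => abs_nonneg _) z
      · exact Set.indicator_le_self' (fun _ _ => abs_nonneg _) z
    · filter_upwards [h0] with z hz
      have hzn : 0 < ‖z‖ := norm_pos_iff.2 hz
      have : ∀ᶠ n in atTop,
          ({z : Fin N → ℚ_[p] | ‖z‖ ≤ ((p:ℝ)⁻¹) ^ n}.indicator (fun z => |A z|)) z = 0 := by
        filter_upwards [hδ.eventually_lt_const hzn] with n hn
        exact Set.indicator_of_notMem (by simpa using not_le.2 hn) _
      exact tendsto_const_nhds.congr' (this.mono fun n hn => hn.symm)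
  rw [integral_zero] at hconv
  have := (hconv.eventually_lt_const hε).exists
  obtain ⟨n, hn⟩ := this
  refine ⟨((p:ℝ)⁻¹) ^ n, by positivity, ?_⟩
  rwa [integral_indicator (meas_ball _)] at hn

lemma tail_small (hA : Integrable A μ) {ε : ℝ} (hε : 0 < ε) :
    ∃ R : ℝ, (∫ z in {z : Fin N → ℚ_[p] | R < ‖z‖}, |A z| ∂μ) < ε := by
  have hconv : Tendsto (fun n : ℕ =>
      ∫ z, ({z : Fin N → ℚ_[p] | (n:ℝ) < ‖z‖}.indicator (fun z => |A z|)) z ∂μ)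
      atTop (𝓝 (∫ _z, (0:ℝ) ∂μ)) := by
    apply tendsto_integral_of_dominated_convergence (fun z => |A z|)
    · intro n
      exact (hA.abs.indicator (meas_tail _)).aestronglyMeasurable
    · exact hA.abs
    · intro n
      filter_upwards with z
      rw [Real.norm_eq_abs]
      refine abs_le.2 ⟨?_, Set.indicator_le_self' (fun _ _ => abs_nonneg _) z⟩
      refine neg_nonpos.2 (abs_nonneg _) |>.trans ?_
      exact Set.indicator_nonneg (fun _ _ => abs_nonneg _) z
    · filter_upwards with z
      obtain ⟨n₀, hn₀⟩ := exists_nat_ge ‖z‖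
      have : ∀ᶠ n : ℕ in atTop,
          ({z : Fin N → ℚ_[p] | (n:ℝ) < ‖z‖}.indicator (fun z => |A z|)) z = 0 := by
        filter_upwards [eventually_ge_atTop n₀] with n hn
        refine Set.indicator_of_notMem ?_ _
        simp only [Set.mem_setOf_eq, not_lt]
        exact hn₀.trans (by exact_mod_cast hn)
      exact tendsto_const_nhds.congr' (this.mono fun n hn => hn.symm)
  rw [integral_zero] at hconv
  obtain ⟨n, hn⟩ := (hconv.eventually_lt_const hε).exists
  exact ⟨n, by rwa [integral_indicator (meas_tail _)] at hn⟩

lemma conv_integrable (hA : Integrable A μ) (hh : AEStronglyMeasurable h μ)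
    (hC : ∀ y, |h y| ≤ C) (x : Fin N → ℚ_[p]) :
    Integrable (fun y => A (x - y) * h y) μ := by
  have := (hA.comp_sub_left x).bdd_mul hh (c := C) (Eventually.of_forall fun y => by simpa [Real.norm_eq_abs] using hC y)
  simpa [mul_comm] using this

lemma conv_cont (hN : 1 ≤ N) (hArad : IsRadial A) (hA : Integrable A μ)
    (hh : AEStronglyMeasurable h μ) (hCpos : 0 ≤ C) (hC : ∀ y, |h y| ≤ C) :
    Continuous (fun x => ∫ y, A (x - y) * h y ∂μ) := by
  rw [Metric.continuous_iff]
  intro x ε hε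
  obtain ⟨δ, hδpos, hδ⟩ := shrink μ hA hN (show 0 < ε / (2 * C + 1) by positivity)
  set Bδ : Set (Fin N → ℚ_[p]) := {z | ‖z‖ ≤ δ} with hBδ
  set ind : (Fin N → ℚ_[p]) → ℝ := Bδ.indicator (fun z => |A z|) with hind
  have hind_nonneg : ∀ z, 0 ≤ ind z := fun z => Set.indicator_nonneg (fun _ _ => abs_nonneg _) z
  have hindInt : Integrable ind μ := hA.abs.indicator (meas_ball δ)
  refine ⟨δ, hδpos, fun x' hx' => ?_⟩
  have hx'δ : ‖x' - x‖ ≤ δ := by rw [← dist_eq_norm]; exact hx'.le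
  have key : ∀ y, |A (x' - y) * h y - A (x - y) * h y| ≤ C * (ind (x' - y) + ind (x - y)) := by
    intro y
    by_cases hy : ‖x - y‖ ≤ δ
    · have h1 : ‖x' - y‖ ≤ δ := by
        have e : x' - y = (x' - x) + (x - y) := by abel
        rw [e]
        exact (ultra_add _ _).trans (max_le hx'δ hy)
      have m1 : x' - y ∈ Bδ := h1
      have m2 : x - y ∈ Bδ := hy
      have e1 : ind (x' - y) = |A (x' - y)| := Set.indicator_of_mem m1 _
      have e2 : ind (x - y) = |A (x - y)| := Set.indicator_of_mem m2 _
      rw [e1, e2]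
      calc |A (x' - y) * h y - A (x - y) * h y|
          ≤ |A (x' - y) * h y| + |A (x - y) * h y| := abs_sub _ _
        _ = |A (x' - y)| * |h y| + |A (x - y)| * |h y| := by rw [abs_mul, abs_mul]
        _ ≤ |A (x' - y)| * C + |A (x - y)| * C := by
            gcongr <;> exact hC y
        _ = C * (|A (x' - y)| + |A (x - y)|) := by ring
    · have hlt : δ < ‖x - y‖ := lt_of_not_ge hy
      have hnorm : ‖x' - y‖ = ‖x - y‖ := by
        have e : x' - y = (x - y) + (x' - x) := by abel
        rw [e]
        exact ultra_eq (lt_of_le_of_lt hx'δ hlt)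
      rw [hArad _ _ hnorm]
      simp only [sub_self, abs_zero]
      exact mul_nonneg hCpos (add_nonneg (hind_nonneg _) (hind_nonneg _))
  have int1 : Integrable (fun y => A (x' - y) * h y) μ := conv_integrable μ hA hh hC x'
  have int2 : Integrable (fun y => A (x - y) * h y) μ := conv_integrable μ hA hh hC x
  have intr : Integrable (fun y => C * (ind (x' - y) + ind (x - y))) μ :=
    (((hindInt.comp_sub_left x').add (hindInt.comp_sub_left x)).const_mul C)
  have hI0 : 0 ≤ ∫ z in Bδ, |A z| ∂μ := setIntegral_nonneg (meas_ball δ) fun z _ => abs_nonneg _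
  have step : dist (∫ y, A (x' - y) * h y ∂μ) (∫ y, A (x - y) * h y ∂μ)
      ≤ C * ((∫ z in Bδ, |A z| ∂μ) + ∫ z in Bδ, |A z| ∂μ) := by
    rw [Real.dist_eq, ← integral_sub int1 int2]
    calc |∫ y, (A (x' - y) * h y - A (x - y) * h y) ∂μ|
        ≤ ∫ y, |A (x' - y) * h y - A (x - y) * h y| ∂μ := by
          simpa [Real.norm_eq_abs] using norm_integral_le_integral_norm
            (fun y => A (x' - y) * h y - A (x - y) * h y) (μ := μ)
      _ ≤ ∫ y, C * (ind (x' - y) + ind (x - y)) ∂μ := by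
          exact integral_mono (int1.sub int2).abs intr key
      _ = C * ((∫ y, ind (x' - y) ∂μ) + ∫ y, ind (x - y) ∂μ) := by
          rw [integral_const_mul, integral_add (hindInt.comp_sub_left x') (hindInt.comp_sub_left x)]
      _ = C * ((∫ z in Bδ, |A z| ∂μ) + ∫ z in Bδ, |A z| ∂μ) := by
          rw [indicator_shift μ x' (meas_ball δ), indicator_shift μ x (meas_ball δ)]
  calc dist (∫ y, A (x' - y) * h y ∂μ) (∫ y, A (x - y) * h y ∂μ)
      ≤ C * ((∫ z in Bδ, |A z| ∂μ) + ∫ z in Bδ, |A z| ∂μ) := step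
    _ = 2 * C * (∫ z in Bδ, |A z| ∂μ) := by ring
    _ ≤ 2 * C * (ε / (2 * C + 1)) := mul_le_mul_of_nonneg_left hδ.le (by positivity)
    _ < ε := by
        rw [← mul_div_assoc, div_lt_iff₀ (by positivity : (0:ℝ) < 2 * C + 1)]
        nlinarith


lemma conv_zero (hA : Integrable A μ) (hh : AEStronglyMeasurable h μ)
    (hCpos : 0 ≤ C) (hC : ∀ y, |h y| ≤ C)
    (hh0 : Tendsto h (comap (fun x : Fin N → ℚ_[p] => ‖x‖) atTop) (𝓝 0)) :
    Tendsto (fun x => ∫ y, A (x - y) * h y ∂μ)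
      (comap (fun x : Fin N → ℚ_[p] => ‖x‖) atTop) (𝓝 0) := by
  rw [Metric.tendsto_nhds]
  intro ε hε
  set M := ∫ z, |A z| ∂μ with hM
  have hM0 : 0 ≤ M := integral_nonneg fun z => abs_nonneg _
  have hε' : 0 < ε / (C + M + 1) := by positivity
  set ε' := ε / (C + M + 1) with hε'def
  have hev : ∀ᶠ y in comap (fun x : Fin N → ℚ_[p] => ‖x‖) atTop, |h y| < ε' := by
    have := Metric.tendsto_nhds.1 hh0 ε' hε'
    simpa [Real.dist_eq] using this
  rw [eventually_comap, eventually_atTop] at hev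
  obtain ⟨R₁, hR₁⟩ := hev
  obtain ⟨R₂, hR₂⟩ := tail_small μ hA hε'
  set T : Set (Fin N → ℚ_[p]) := {z | R₂ < ‖z‖} with hT
  set ind : (Fin N → ℚ_[p]) → ℝ := T.indicator (fun z => |A z|) with hind
  have hind_nonneg : ∀ z, 0 ≤ ind z := fun z => Set.indicator_nonneg (fun _ _ => abs_nonneg _) z
  have hindInt : Integrable ind μ := hA.abs.indicator (meas_tail R₂)
  rw [eventually_comap, eventually_atTop]
  refine ⟨max R₁ R₂ + 1, fun b hb x hxb => ?_⟩
  have hxnorm : max R₁ R₂ + 1 ≤ ‖x‖ := by rw [hxb]; exact hb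
  have hx1 : R₁ < ‖x‖ := lt_of_le_of_lt (le_max_left _ _) (by linarith)
  have hx2 : R₂ < ‖x‖ := lt_of_le_of_lt (le_max_right _ _) (by linarith)
  have key : ∀ y, |A (x - y) * h y| ≤ C * ind (x - y) + ε' * |A (x - y)| := by
    intro y
    by_cases hy : R₁ ≤ ‖y‖
    · have hhy : |h y| ≤ ε' := (hR₁ ‖y‖ hy y rfl).le
      calc |A (x - y) * h y| = |A (x - y)| * |h y| := abs_mul _ _
        _ ≤ |A (x - y)| * ε' := mul_le_mul_of_nonneg_left hhy (abs_nonneg _)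
        _ = ε' * |A (x - y)| := mul_comm _ _
        _ ≤ C * ind (x - y) + ε' * |A (x - y)| := by
            have := mul_nonneg hCpos (hind_nonneg (x - y)); linarith
    · have hylt : ‖y‖ < R₁ := lt_of_not_ge hy
      have hnorm : ‖x - y‖ = ‖x‖ := by
        have e : x - y = x + (-y) := by abel
        rw [e]
        refine ultra_eq ?_
        rw [norm_neg]
        linarith
      have mem : x - y ∈ T := by
        simp only [hT, Set.mem_setOf_eq, hnorm]
        exact hx2
      have e1 : ind (x - y) = |A (x - y)| := Set.indicator_of_mem mem _
      calc |A (x - y) * h y| = |A (x - y)| * |h y| := abs_mul _ _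
        _ ≤ |A (x - y)| * C := mul_le_mul_of_nonneg_left (hC y) (abs_nonneg _)
        _ = C * ind (x - y) := by rw [e1]; ring
        _ ≤ C * ind (x - y) + ε' * |A (x - y)| := by
            have := mul_nonneg hε'.le (abs_nonneg (A (x - y))); linarith
  have int1 : Integrable (fun y => A (x - y) * h y) μ := conv_integrable μ hA hh hC x
  have intr : Integrable (fun y => C * ind (x - y) + ε' * |A (x - y)|) μ :=
    ((hindInt.comp_sub_left x).const_mul C).add (((hA.comp_sub_left x).abs).const_mul ε')
  have habs : |∫ y, A (x - y) * h y ∂μ| ≤ C * (∫ z in T, |A z| ∂μ) + ε' * M := by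
    calc |∫ y, A (x - y) * h y ∂μ|
        ≤ ∫ y, |A (x - y) * h y| ∂μ := by
          have h9 := norm_integral_le_integral_norm (fun y => A (x - y) * h y) (μ := μ)
          simpa only [Real.norm_eq_abs] using h9
      _ ≤ ∫ y, (C * ind (x - y) + ε' * |A (x - y)|) ∂μ := integral_mono int1.abs intr key
      _ = C * (∫ y, ind (x - y) ∂μ) + ε' * ∫ y, |A (x - y)| ∂μ := by
          rw [integral_add ((hindInt.comp_sub_left x).const_mul C)
            (((hA.comp_sub_left x).abs).const_mul ε'), integral_const_mul, integral_const_mul]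
      _ = C * (∫ z in T, |A z| ∂μ) + ε' * M := by
          rw [indicator_shift μ x (meas_tail R₂), hM,
            integral_sub_left_eq_self (fun z => |A z|) μ x]
  rw [Real.dist_eq, sub_zero]
  have hTI0 : 0 ≤ ∫ z in T, |A z| ∂μ :=
    setIntegral_nonneg (meas_tail R₂) fun z _ => abs_nonneg _
  calc |∫ y, A (x - y) * h y ∂μ| ≤ C * (∫ z in T, |A z| ∂μ) + ε' * M := habs
    _ ≤ C * ε' + ε' * M := by
        have := mul_le_mul_of_nonneg_left hR₂.le hCpos
        linarith
    _ < ε := by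
        have hd : (0:ℝ) < C + M + 1 := by positivity
        rw [hε'def, div_eq_mul_inv,
          show C * (ε * (C + M + 1)⁻¹) + ε * (C + M + 1)⁻¹ * M = ε * (C + M) * (C + M + 1)⁻¹
            by ring, ← div_eq_mul_inv, div_lt_iff₀ hd]
        nlinarith
  

end Meas

end AuxLemmas

/-- If `‖A‖_{L¹} L(f) < 1`, the CNN has a unique stationary state in `X_∞`. -/
theorem stmt9 (p N : ℕ) [Fact p.Prime] (hN : 1 ≤ N)
    [MeasurableSpace (Fin N → ℚ_[p])] [BorelSpace (Fin N → ℚ_[p])]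
    (μ : Measure (Fin N → ℚ_[p])) [μ.IsAddHaarMeasure]
    (hμ : μ {x : Fin N → ℚ_[p] | ‖x‖ ≤ 1} = 1)
    (A B : (Fin N → ℚ_[p]) → ℝ) (hArad : IsRadial A) (hBrad : IsRadial B)
    (hA : Integrable A μ) (hB : Integrable B μ)
    (U Z : (Fin N → ℚ_[p]) → ℝ) (hU : MemXInf U) (hZ : MemXInf Z)
    (f : ℝ → ℝ) (L : NNReal) (hf : LipschitzWith L f) (hf0 : f 0 = 0)
    (hcontr : (∫ y, |A y| ∂μ) * (L : ℝ) < 1) :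
    ∃! Xstat : (Fin N → ℚ_[p]) → ℝ, MemXInf Xstat ∧
      ∀ x : Fin N → ℚ_[p], Xstat x = Hop μ A B U Z f Xstat x := by
    classical
  have hfilt : (comap (fun x : Fin N → ℚ_[p] => ‖x‖) atTop)
      = cocompact (Fin N → ℚ_[p]) := by
    rw [comap_norm_atTop, Metric.cobounded_eq_cocompact]
  set M := ∫ z, |A z| ∂μ with hMdef
  have hM0 : 0 ≤ M := integral_nonneg fun z => abs_nonneg _
  set K : NNReal := ⟨M, hM0⟩ * L with hKdef
  have hKcoe : (K : ℝ) = M * (L : ℝ) := rfl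
  have hK1 : K < 1 := by
    rw [← NNReal.coe_lt_coe, hKcoe, NNReal.coe_one]; exact hcontr
  let Uc : ZeroAtInftyContinuousMap (Fin N → ℚ_[p]) ℝ :=
    ⟨⟨U, hU.1⟩, by rw [← hfilt]; exact hU.2⟩
  have hUb : ∀ y, |U y| ≤ ‖Uc.toBCF‖ := fun y => by
    have h := Uc.toBCF.norm_coe_le_norm y; rw [Real.norm_eq_abs] at h; exact h
  -- properties of `f ∘ g` for `g` in `C₀`
  have hmeas : ∀ g : ZeroAtInftyContinuousMap (Fin N → ℚ_[p]) ℝ,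
      AEStronglyMeasurable (fun y => f (g y)) μ := fun g =>
    (hf.continuous.comp g.continuous).aestronglyMeasurable
  have hbd : ∀ g : ZeroAtInftyContinuousMap (Fin N → ℚ_[p]) ℝ,
      ∀ y, |f (g y)| ≤ (L : ℝ) * ‖g.toBCF‖ := by
    intro g y
    have h1 : dist (f (g y)) (f 0) ≤ (L : ℝ) * dist (g y) 0 := hf.dist_le_mul _ _
    rw [hf0, dist_zero_right, dist_zero_right, Real.norm_eq_abs, Real.norm_eq_abs] at h1
    refine h1.trans (mul_le_mul_of_nonneg_left ?_ L.coe_nonneg)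
    simpa [Real.norm_eq_abs] using g.toBCF.norm_coe_le_norm y
  have hbd0 : ∀ g : ZeroAtInftyContinuousMap (Fin N → ℚ_[p]) ℝ,
      (0:ℝ) ≤ (L : ℝ) * ‖g.toBCF‖ := fun g => by positivity
  have hHprop : ∀ g : ZeroAtInftyContinuousMap (Fin N → ℚ_[p]) ℝ,
      Continuous (Hop μ A B U Z f ⇑g) ∧
      Tendsto (Hop μ A B U Z f ⇑g)
        (comap (fun x : Fin N → ℚ_[p] => ‖x‖) atTop) (𝓝 0) := by
    intro g
    have hfg0 : Tendsto (fun y => f (g y))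
        (comap (fun x : Fin N → ℚ_[p] => ‖x‖) atTop) (𝓝 0) := by
      have hg0 : Tendsto ⇑g (comap (fun x : Fin N → ℚ_[p] => ‖x‖) atTop) (𝓝 0) := by
        rw [hfilt]; exact g.zero_at_infty'
      have h2 := (hf.continuous.tendsto 0).comp hg0
      rwa [hf0] at h2
    constructor
    · show Continuous fun x =>
        (∫ y, A (x - y) * f (g y) ∂μ) + (∫ y, B (x - y) * U y ∂μ) + Z x
      exact ((conv_cont μ hN hArad hA (hmeas g) (hbd0 g) (hbd g)).add
        (conv_cont μ hN hBrad hB hU.1.aestronglyMeasurable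
          (norm_nonneg Uc.toBCF) hUb)).add hZ.1
    · show Tendsto (fun x =>
        (∫ y, A (x - y) * f (g y) ∂μ) + (∫ y, B (x - y) * U y ∂μ) + Z x) _ _
      have h3 := ((conv_zero μ hA (hmeas g) (hbd0 g) (hbd g) hfg0).add
        (conv_zero μ hB hU.1.aestronglyMeasurable (norm_nonneg Uc.toBCF) hUb hU.2)).add hZ.2
      simpa using h3
  let T : ZeroAtInftyContinuousMap (Fin N → ℚ_[p]) ℝ →
      ZeroAtInftyContinuousMap (Fin N → ℚ_[p]) ℝ := fun g =>
    ⟨⟨Hop μ A B U Z f ⇑g, (hHprop g).1⟩, by rw [← hfilt]; exact (hHprop g).2⟩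
  have hT_lip : LipschitzWith K T := by
    apply LipschitzWith.of_dist_le_mul
    intro g₁ g₂
    rw [← ZeroAtInftyContinuousMap.dist_toBCF_eq_dist]
    refine (BoundedContinuousFunction.dist_le (by positivity)).2 fun x => ?_
    have hptw : ∀ y, |f (g₁ y) - f (g₂ y)| ≤ (L : ℝ) * dist g₁ g₂ := by
      intro y
      have h1 : dist (f (g₁ y)) (f (g₂ y)) ≤ (L : ℝ) * dist (g₁ y) (g₂ y) :=
        hf.dist_le_mul _ _
      rw [Real.dist_eq] at h1
      refine h1.trans (mul_le_mul_of_nonneg_left ?_ L.coe_nonneg)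
      calc dist (g₁ y) (g₂ y) = dist (g₁.toBCF y) (g₂.toBCF y) := rfl
        _ ≤ dist g₁.toBCF g₂.toBCF := BoundedContinuousFunction.dist_coe_le_dist y
        _ = dist g₁ g₂ := ZeroAtInftyContinuousMap.dist_toBCF_eq_dist
    have int1 : Integrable (fun y => A (x - y) * f (g₁ y)) μ :=
      conv_integrable μ hA (hmeas g₁) (hbd g₁) x
    have int2 : Integrable (fun y => A (x - y) * f (g₂ y)) μ :=
      conv_integrable μ hA (hmeas g₂) (hbd g₂) x
    have intr : Integrable (fun y => |A (x - y)| * ((L : ℝ) * dist g₁ g₂)) μ :=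
      ((hA.comp_sub_left x).abs).mul_const _
    have hcancel : Hop μ A B U Z f ⇑g₁ x - Hop μ A B U Z f ⇑g₂ x
        = (∫ y, A (x - y) * f (g₁ y) ∂μ) - ∫ y, A (x - y) * f (g₂ y) ∂μ := by
      simp only [Hop]; ring
    have hAshift : (∫ y, |A (x - y)| ∂μ) = M := by
      rw [hMdef]; exact integral_sub_left_eq_self (fun z => |A z|) μ x
    calc dist ((T g₁).toBCF x) ((T g₂).toBCF x)
        = |Hop μ A B U Z f ⇑g₁ x - Hop μ A B U Z f ⇑g₂ x| := Real.dist_eq _ _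
      _ = |(∫ y, A (x - y) * f (g₁ y) ∂μ) - ∫ y, A (x - y) * f (g₂ y) ∂μ| := by
          rw [hcancel]
      _ = |∫ y, (A (x - y) * f (g₁ y) - A (x - y) * f (g₂ y)) ∂μ| := by
          rw [integral_sub int1 int2]
      _ ≤ ∫ y, |A (x - y) * f (g₁ y) - A (x - y) * f (g₂ y)| ∂μ := by
          have h9 := norm_integral_le_integral_norm
            (fun y => A (x - y) * f (g₁ y) - A (x - y) * f (g₂ y)) (μ := μ)
          simpa only [Real.norm_eq_abs] using h9
      _ ≤ ∫ y, |A (x - y)| * ((L : ℝ) * dist g₁ g₂) ∂μ := by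
          refine integral_mono (int1.sub int2).abs intr fun y => ?_
          rw [← mul_sub, abs_mul]
          exact mul_le_mul_of_nonneg_left (hptw y) (abs_nonneg _)
      _ = (∫ y, |A (x - y)| ∂μ) * ((L : ℝ) * dist g₁ g₂) := integral_mul_const _ _
      _ = (K : ℝ) * dist g₁ g₂ := by rw [hAshift, hKcoe]; ring
  have hcw : ContractingWith K T := ⟨hK1, hT_lip⟩
  haveI : Nonempty (ZeroAtInftyContinuousMap (Fin N → ℚ_[p]) ℝ) := ⟨0⟩
  set G := ContractingWith.fixedPoint T hcw with hGdef
  have hGfix : T G = G := hcw.fixedPoint_isFixedPt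
  refine ⟨⇑G, ⟨⟨G.continuous, by rw [hfilt]; exact G.zero_at_infty'⟩, fun x => ?_⟩, ?_⟩
  · have h4 := congrArg (fun F : ZeroAtInftyContinuousMap (Fin N → ℚ_[p]) ℝ => F x) hGfix
    exact h4.symm
  · rintro Y ⟨⟨hYc, hYv⟩, hYeq⟩
    let Yc : ZeroAtInftyContinuousMap (Fin N → ℚ_[p]) ℝ :=
      ⟨⟨Y, hYc⟩, by rw [← hfilt]; exact hYv⟩
    have hYfix : Function.IsFixedPt T Yc := by
      apply ZeroAtInftyContinuousMap.ext
      intro x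
      exact (hYeq x).symm
    have h5 : Yc = G := hcw.fixedPoint_unique hYfix
    calc Y = ⇑Yc := rfl
      _ = ⇑G := by rw [h5]
end

section
/- Let p be a prime, let k₁, k₂ ∈ ℤ, and let a ∈ ℚ_p. Then ∫_{ℚ_p} Ω(p^{k₁}|a−y|_p) Ω(p^{k₂}|y|_p) dy = p^{−max(k₁,k₂)} Ω(p^{min(k₁,k₂)}|a|_p), where Ω(p^{k}|x|_p) denotes the indicator function of the ball {x ∈ ℚ_p : |x|_p ≤ p^{−k}} and dy is the Haar measure on ℚ_p normalized so that ℤ_p has measure 1. -/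
open MeasureTheory Filter
open scoped ENNReal

private lemma padic_ball_measurable {p : ℕ} [Fact p.Prime]
    [MeasurableSpace ℚ_[p]] [BorelSpace ℚ_[p]] (r : ℝ) :
    MeasurableSet {x : ℚ_[p] | ‖x‖ ≤ r} :=
  (isClosed_le continuous_norm continuous_const).measurableSet

private lemma padic_ball_step {p : ℕ} [Fact p.Prime]
    [MeasurableSpace ℚ_[p]] [BorelSpace ℚ_[p]]
    (μ : Measure ℚ_[p]) [μ.IsAddHaarMeasure] (k : ℤ) :
    μ {x : ℚ_[p] | ‖x‖ ≤ (p : ℝ) ^ (-k)} =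
      p * μ {x : ℚ_[p] | ‖x‖ ≤ (p : ℝ) ^ (-(k + 1))} := by
  have hpp : p.Prime := Fact.out
  have hp1 : (1 : ℝ) < p := by exact_mod_cast hpp.one_lt
  have hp0R : (p : ℝ) ≠ 0 := by positivity
  have hp0 : (p : ℚ_[p]) ≠ 0 := by exact_mod_cast hpp.ne_zero
  set B1 : Set ℚ_[p] := {x | ‖x‖ ≤ (p : ℝ) ^ (-(k + 1))} with hB1
  set S : ℕ → Set ℚ_[p] :=
    fun j => (fun x => -((j : ℚ_[p]) * (p : ℚ_[p]) ^ k) + x) ⁻¹' B1 with hSdef0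
  have hSdef : ∀ j x, x ∈ S j ↔ ‖x - (j : ℚ_[p]) * (p : ℚ_[p]) ^ k‖ ≤ (p : ℝ) ^ (-(k + 1)) := by
    intro j x
    simp [S, B1, Set.mem_preimage, neg_add_eq_sub]
  have hcover : {x : ℚ_[p] | ‖x‖ ≤ (p : ℝ) ^ (-k)} = ⋃ j ∈ Finset.range p, S j := by
    ext x
    simp only [Set.mem_setOf_eq, Set.mem_iUnion, Finset.mem_range, hSdef]
    constructor
    · intro hx
      have hz' : ‖x * (p : ℚ_[p]) ^ (-k)‖ ≤ 1 := by
        rw [norm_mul, Padic.norm_p_zpow, neg_neg]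
        calc ‖x‖ * (p : ℝ) ^ k ≤ (p : ℝ) ^ (-k) * (p : ℝ) ^ k := by
              apply mul_le_mul_of_nonneg_right hx (by positivity)
          _ = 1 := by rw [← zpow_add₀ hp0R]; simp
      set z : ℤ_[p] := ⟨x * (p : ℚ_[p]) ^ (-k), hz'⟩ with hzdef
      refine ⟨z.appr 1, by simpa using z.appr_lt 1, ?_⟩
      have hmem := z.appr_spec 1
      rw [← PadicInt.norm_le_pow_iff_mem_span_pow] at hmem
      have hzx : (z : ℚ_[p]) = x * (p : ℚ_[p]) ^ (-k) := rfl
      have key : x - ((z.appr 1 : ℕ) : ℚ_[p]) * (p : ℚ_[p]) ^ k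
          = ((z - ((z.appr 1 : ℕ) : ℤ_[p]) : ℤ_[p]) : ℚ_[p]) * (p : ℚ_[p]) ^ k := by
        push_cast
        rw [sub_mul, mul_assoc, ← zpow_add₀ hp0]
        simp
      rw [key, norm_mul, Padic.norm_p_zpow, ← PadicInt.norm_def]
      calc ‖z - ((z.appr 1 : ℕ) : ℤ_[p])‖ * (p : ℝ) ^ (-k)
          ≤ (p : ℝ) ^ (-(1 : ℕ) : ℤ) * (p : ℝ) ^ (-k) := by
            apply mul_le_mul_of_nonneg_right hmem (by positivity)
        _ = (p : ℝ) ^ (-(k + 1)) := by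
            rw [← zpow_add₀ hp0R]; ring_nf
    · rintro ⟨j, hj, hx⟩
      have h1 : ‖(j : ℚ_[p]) * (p : ℚ_[p]) ^ k‖ ≤ (p : ℝ) ^ (-k) := by
        rw [norm_mul, Padic.norm_p_zpow]
        have : ‖(j : ℚ_[p])‖ ≤ 1 := by
          have := Padic.norm_int_le_one (p := p) (j : ℤ)
          push_cast at this
          exact this
        calc ‖(j : ℚ_[p])‖ * (p : ℝ) ^ (-k) ≤ 1 * (p : ℝ) ^ (-k) :=
              mul_le_mul_of_nonneg_right this (by positivity)
          _ = (p : ℝ) ^ (-k) := one_mul _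
      have h2 : (p : ℝ) ^ (-(k + 1)) ≤ (p : ℝ) ^ (-k) := by
        apply zpow_le_zpow_right₀ hp1.le
        omega
      calc ‖x‖ = ‖(x - (j : ℚ_[p]) * (p : ℚ_[p]) ^ k) + (j : ℚ_[p]) * (p : ℚ_[p]) ^ k‖ := by
            ring_nf
        _ ≤ max ‖x - (j : ℚ_[p]) * (p : ℚ_[p]) ^ k‖ ‖(j : ℚ_[p]) * (p : ℚ_[p]) ^ k‖ :=
            Padic.nonarchimedean _ _
        _ ≤ (p : ℝ) ^ (-k) := max_le (le_trans hx h2) h1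
  have hdisj : Set.PairwiseDisjoint ↑(Finset.range p) S := by
    intro i hi j hj hij
    simp only [Finset.coe_range, Set.mem_Iio] at hi hj
    refine Set.disjoint_left.mpr fun x hxi hxj => ?_
    have h1 := (hSdef i x).mp hxi
    have h2 := (hSdef j x).mp hxj
    have hd : ‖((i : ℚ_[p]) - j) * (p : ℚ_[p]) ^ k‖ ≤ (p : ℝ) ^ (-(k + 1)) := by
      have : ((i : ℚ_[p]) - j) * (p : ℚ_[p]) ^ k
          = (x - (j : ℚ_[p]) * (p : ℚ_[p]) ^ k) - (x - (i : ℚ_[p]) * (p : ℚ_[p]) ^ k) := by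
        ring
      rw [this, sub_eq_add_neg]
      calc ‖(x - (j : ℚ_[p]) * (p : ℚ_[p]) ^ k) + -(x - (i : ℚ_[p]) * (p : ℚ_[p]) ^ k)‖
          ≤ max ‖x - (j : ℚ_[p]) * (p : ℚ_[p]) ^ k‖ ‖-(x - (i : ℚ_[p]) * (p : ℚ_[p]) ^ k)‖ :=
            Padic.nonarchimedean _ _
        _ ≤ (p : ℝ) ^ (-(k + 1)) := by rw [norm_neg]; exact max_le h2 h1
    have hnorm1 : ‖((i : ℚ_[p]) - j)‖ = 1 := by
      have hne : ((i : ℤ) - j) ≠ 0 := by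
        intro h
        exact hij (by exact_mod_cast sub_eq_zero.mp h)
      have hndvd : ¬ ((p : ℤ) ∣ (i : ℤ) - j) := by
        intro hdvd
        have habs : |(i : ℤ) - j| < p := by
          rw [abs_sub_lt_iff]
          constructor <;> omega
        have := Int.le_of_dvd (abs_pos.mpr hne) ((dvd_abs _ _).mpr hdvd)
        omega
      have h1' : ¬ ‖(((i : ℤ) - j : ℤ) : ℚ_[p])‖ < 1 := by
        rw [Padic.norm_intCast_lt_one_iff]
        exact hndvd
      have h2' := Padic.norm_int_le_one (p := p) ((i : ℤ) - j)
      have : ‖(((i : ℤ) - j : ℤ) : ℚ_[p])‖ = 1 := le_antisymm h2' (not_lt.mp h1')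
      push_cast at this
      exact this
    rw [norm_mul, hnorm1, one_mul, Padic.norm_p_zpow] at hd
    have : (p : ℝ) ^ (-(k + 1)) < (p : ℝ) ^ (-k) := by
      apply zpow_lt_zpow_right₀ hp1
      omega
    linarith
  have hmeas : ∀ j ∈ Finset.range p, MeasurableSet (S j) := by
    intro j _
    exact (padic_ball_measurable _).preimage (measurable_id.const_add _)
  rw [hcover, measure_biUnion_finset hdisj hmeas]
  have : ∀ j ∈ Finset.range p, μ (S j) = μ B1 := fun j _ =>
    measure_preimage_add μ _ _
  rw [Finset.sum_congr rfl this, Finset.sum_const, Finset.card_range, nsmul_eq_mul]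

private lemma padic_ball_volume {p : ℕ} [Fact p.Prime]
    [MeasurableSpace ℚ_[p]] [BorelSpace ℚ_[p]]
    (μ : Measure ℚ_[p]) [μ.IsAddHaarMeasure]
    (hμ : μ {x : ℚ_[p] | ‖x‖ ≤ 1} = 1) (k : ℤ) :
    μ {x : ℚ_[p] | ‖x‖ ≤ (p : ℝ) ^ (-k)} = (p : ℝ≥0∞) ^ (-k) := by
  have hpp : p.Prime := Fact.out
  have hp0 : (p : ℝ≥0∞) ≠ 0 := by exact_mod_cast hpp.ne_zero
  have hptop : (p : ℝ≥0∞) ≠ ⊤ := ENNReal.natCast_ne_top p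
  have hmul : ∀ m : ℤ, (p : ℝ≥0∞) * (p : ℝ≥0∞) ^ m = (p : ℝ≥0∞) ^ (m + 1) := by
    intro m
    rw [ENNReal.zpow_add hp0 hptop m 1, zpow_one]
    ring
  induction k using Int.induction_on with
  | zero => simpa using hμ
  | succ n ih =>
      have hstep := padic_ball_step μ n
      rw [ih] at hstep
      apply (ENNReal.mul_right_strictMono hp0 hptop).injective
      show (p : ℝ≥0∞) * μ {x : ℚ_[p] | ‖x‖ ≤ (p : ℝ) ^ (-((n : ℤ) + 1))}
          = (p : ℝ≥0∞) * (p : ℝ≥0∞) ^ (-((n : ℤ) + 1))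
      rw [← hstep, hmul]
      congr 1
      ring
  | pred n ih =>
      have hstep := padic_ball_step μ (-(n : ℤ) - 1)
      rw [show (-(n : ℤ) - 1 + 1) = -(n : ℤ) by ring] at hstep
      rw [show (-(-(n : ℤ))) = (- -(n : ℤ)) by ring] at hstep
      rw [ih] at hstep
      rw [hstep, hmul]
      congr 1
      ring

private lemma ennreal_toReal_zpow {p : ℕ} (hp : 0 < p) (k : ℤ) :
    ((p : ℝ≥0∞) ^ k).toReal = (p : ℝ) ^ k := by
  have hp0 : (p : ℝ≥0∞) ≠ 0 := by exact_mod_cast hp.ne'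
  have hptop : (p : ℝ≥0∞) ≠ ⊤ := ENNReal.natCast_ne_top p
  induction k using Int.induction_on with
  | zero => simp
  | succ n ih =>
      rw [ENNReal.zpow_add hp0 hptop (n : ℤ) 1, zpow_add₀ (by positivity : (p:ℝ) ≠ 0) (n : ℤ) 1,
        ENNReal.toReal_mul, ih]
      simp
  | pred n ih =>
      rw [show (-(n : ℤ) - 1) = -(n : ℤ) + (-1) by ring,
        ENNReal.zpow_add hp0 hptop, zpow_add₀ (by positivity : (p:ℝ) ≠ 0),
        ENNReal.toReal_mul, ih]
      congr 1
      rw [ENNReal.zpow_neg, zpow_one, ENNReal.toReal_inv]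
      simp

/-- Convolution of indicators of balls in `ℚ_p`:
`∫ Ω(p^{k₁}|a−y|_p) Ω(p^{k₂}|y|_p) dy = p^{−max(k₁,k₂)} Ω(p^{min(k₁,k₂)}|a|_p)`. -/
theorem stmt18 (p : ℕ) [Fact p.Prime]
    [MeasurableSpace ℚ_[p]] [BorelSpace ℚ_[p]]
    (μ : Measure ℚ_[p]) [μ.IsAddHaarMeasure]
    (hμ : μ {x : ℚ_[p] | ‖x‖ ≤ 1} = 1)
    (k₁ k₂ : ℤ) (a : ℚ_[p]) :
    (∫ y, (if ‖a - y‖ ≤ (p:ℝ) ^ (-k₁) then (1:ℝ) else 0) *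
          (if ‖y‖ ≤ (p:ℝ) ^ (-k₂) then (1:ℝ) else 0) ∂μ)
      = (p:ℝ) ^ (-(max k₁ k₂)) * (if ‖a‖ ≤ (p:ℝ) ^ (-(min k₁ k₂)) then (1:ℝ) else 0) := by
  have hpp : p.Prime := Fact.out
  have hp1 : (1 : ℝ) < p := by exact_mod_cast hpp.one_lt
  set S : Set ℚ_[p] :=
    {y | ‖a - y‖ ≤ (p : ℝ) ^ (-k₁)} ∩ {y | ‖y‖ ≤ (p : ℝ) ^ (-k₂)} with hSdef
  have hSm : MeasurableSet S := by
    refine MeasurableSet.inter ?_ (padic_ball_measurable _)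
    exact (isClosed_le ((continuous_const.sub continuous_id).norm) continuous_const).measurableSet
  have hint : (∫ y, (if ‖a - y‖ ≤ (p:ℝ) ^ (-k₁) then (1:ℝ) else 0) *
          (if ‖y‖ ≤ (p:ℝ) ^ (-k₂) then (1:ℝ) else 0) ∂μ) = (μ S).toReal := by
    rw [← Measure.real_def, ← integral_indicator_one hSm]
    congr 1
    ext y
    by_cases h1 : ‖a - y‖ ≤ (p : ℝ) ^ (-k₁) <;>
      by_cases h2 : ‖y‖ ≤ (p : ℝ) ^ (-k₂)
    · rw [if_pos h1, if_pos h2, Set.indicator_of_mem (show y ∈ S from ⟨h1, h2⟩)]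
      norm_num
    · rw [if_pos h1, if_neg h2, Set.indicator_of_notMem (fun h => h2 h.2)]
      ring
    · rw [if_neg h1, if_pos h2, Set.indicator_of_notMem (fun h => h1 h.1)]
      ring
    · rw [if_neg h1, if_neg h2, Set.indicator_of_notMem (fun h => h1 h.1)]
      ring
  rw [hint]
  by_cases ha : ‖a‖ ≤ (p : ℝ) ^ (-(min k₁ k₂))
  · rw [if_pos ha, mul_one]
    rcases le_total k₁ k₂ with hk | hk
    · have hmax : max k₁ k₂ = k₂ := max_eq_right hk
      have hmin : min k₁ k₂ = k₁ := min_eq_left hk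
      rw [hmin] at ha
      have hSeq : S = {y : ℚ_[p] | ‖y‖ ≤ (p : ℝ) ^ (-k₂)} := by
        apply Set.Subset.antisymm Set.inter_subset_right
        intro y hy
        refine ⟨?_, hy⟩
        have h2 : (p : ℝ) ^ (-k₂) ≤ (p : ℝ) ^ (-k₁) := by
          apply zpow_le_zpow_right₀ hp1.le; omega
        calc ‖a - y‖ = ‖a + (-y)‖ := by rw [sub_eq_add_neg]
          _ ≤ max ‖a‖ ‖-y‖ := Padic.nonarchimedean _ _
          _ ≤ (p : ℝ) ^ (-k₁) := by
              rw [norm_neg]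
              exact max_le ha (le_trans hy h2)
      rw [hSeq, padic_ball_volume μ hμ, hmax, ennreal_toReal_zpow hpp.pos]
    · have hmax : max k₁ k₂ = k₁ := max_eq_left hk
      have hmin : min k₁ k₂ = k₂ := min_eq_right hk
      rw [hmin] at ha
      have hSeq : S = (fun y => -a + y) ⁻¹' {x : ℚ_[p] | ‖x‖ ≤ (p : ℝ) ^ (-k₁)} := by
        have hrw : ∀ y : ℚ_[p], ‖-a + y‖ = ‖a - y‖ := by
          intro y; rw [neg_add_eq_sub, norm_sub_rev]
        apply Set.Subset.antisymm
        · intro y hy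
          simp only [Set.mem_preimage, Set.mem_setOf_eq, hrw]
          exact hy.1
        · intro y hy
          simp only [Set.mem_preimage, Set.mem_setOf_eq, hrw] at hy
          refine ⟨hy, ?_⟩
          have h2 : (p : ℝ) ^ (-k₁) ≤ (p : ℝ) ^ (-k₂) := by
            apply zpow_le_zpow_right₀ hp1.le; omega
          calc ‖y‖ = ‖a + -(a - y)‖ := by ring_nf
            _ ≤ max ‖a‖ ‖-(a - y)‖ := Padic.nonarchimedean _ _
            _ ≤ (p : ℝ) ^ (-k₂) := by
                rw [norm_neg]
                exact max_le ha (le_trans hy h2)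
      rw [hSeq, measure_preimage_add, padic_ball_volume μ hμ, hmax,
        ennreal_toReal_zpow hpp.pos]
  · rw [if_neg ha, mul_zero]
    have hSempty : S = ∅ := by
      rw [Set.eq_empty_iff_forall_notMem]
      rintro y ⟨h1, h2⟩
      apply ha
      calc ‖a‖ = ‖(a - y) + y‖ := by ring_nf
        _ ≤ max ‖a - y‖ ‖y‖ := Padic.nonarchimedean _ _
        _ ≤ (p : ℝ) ^ (-(min k₁ k₂)) := by
            apply max_le
            · exact le_trans h1 (zpow_le_zpow_right₀ hp1.le (by omega))
            · exact le_trans h2 (zpow_le_zpow_right₀ hp1.le (by omega))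
    rw [hSempty]
    simp
end
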